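/- arXiv:1811.02139 — 4 statements merged into one kernel-verified Lean document; each statement's English description precedes it below -/
import Mathlib

section
/- (Bourgain–Fremlin–Talagrand) Let X be a compact Hausdorff topological space and A ⊆ C(X) with |A| ≤ ℵ_0 and sup_{f ∈ A} ||f||_∞ < ∞. Then the following are equivalent: (i) A is sequentially dependent as a subset of ℝ^X; (ii) for every f ∈ ℝ^X, if f lies in the closure of A in ℝ^X with the product topology, then there exists a sequence (f_i)_{i ∈ ℕ} of elements of A converging pointwise to f. -/
open Filter Topology

/-- A set `A ⊆ ℝ^Y` is sequentially independent if there are a sequence `(f_n)` of elements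
of `A`, a real `r`, and `ε > 0` such that for every `I ⊆ ℕ` there is `b_I ∈ Y` with
`{n : f_n(b_I) ≤ r} = I` and `{n : f_n(b_I) ≥ r + ε} = ℕ ∖ I`. -/
def SeqIndependent {Y : Type*} (A : Set (Y → ℝ)) : Prop :=
  ∃ f : ℕ → (Y → ℝ), (∀ n, f n ∈ A) ∧ ∃ r ε : ℝ, 0 < ε ∧
    ∀ I : Set ℕ, ∃ b : Y, {n : ℕ | f n b ≤ r} = I ∧ {n : ℕ | r + ε ≤ f n b} = Iᶜ

/-!
Enumerate `A` as `(a n)` and take an ultrafilter `V` on `ℕ` with `a n → f` pointwise along `V`.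
Fix rationals `p < q`. If some nonempty `P ⊆ X` is such that on the trace on `P` of every
finite intersection of sets `{a m < p}`, `{q < a m}` (when nonempty) `V`-almost every `a n`
crosses the gap `(p, q)`, then a subsequence of `(a n)` realises every finite pattern of the gap
and, by compactness, is independent. Otherwise a transfinite exhaustion (Zorn's lemma) covers `X`
by sets, indexed by such intersections, on each of which `V`-almost no `a n` crosses `(p, q)`;
a sequence that eventually enters each of the countably many `V`-large sets so obtained
converges to `f` everywhere.

Conversely, let `(f n)` witness independence and let `L` be its limit along a non-principal
ultrafilter `U`. The trace `x ↦ (f n x ≤ r)ₙ` maps the compact set where no `f n` takes values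
in `(r, r + ε)` continuously onto the Cantor space. If continuous `g k → L` pointwise, the sets
where `g k` stays below, resp. above, `r + ε / 2` from some `k` on have closed images that cover
the Cantor space and lie inside `U`, resp. its complement. By Baire one of them has interior,
but `U` and its complement are both dense.
-/

open Set

section

variable {X : Type*}

theorem SeqIndependent.mono {Y : Type*} {S T : Set (Y → ℝ)} (h : SeqIndependent S)
    (hST : S ⊆ T) : SeqIndependent T := by
  obtain ⟨f, hf, r, ε, hε, hb⟩ := h
  exact ⟨f, fun n => hST (hf n), r, ε, hε, hb⟩

theorem seqIndependent_range_of_forall_pattern [TopologicalSpace X] [CompactSpace X]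
    {F : ℕ → X → ℝ} (hF : ∀ n, Continuous (F n)) {p q : ℝ} (hpq : p < q)
    (hpat : ∀ (N : ℕ) (I : Set ℕ),
      ∃ x, ∀ i < N, (i ∈ I → F i x ≤ p) ∧ (i ∉ I → q ≤ F i x)) :
    SeqIndependent (range F) := by
  classical
  refine ⟨F, mem_range_self, p, q - p, sub_pos.2 hpq, fun I => ?_⟩
  let T : ℕ → Set X := fun i => if i ∈ I then {x | F i x ≤ p} else {x | q ≤ F i x}
  have hT : ∀ i, IsClosed (T i) := by
    intro i
    by_cases hi : i ∈ I
    · simpa [T, hi] using isClosed_le (hF i) continuous_const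
    · simpa [T, hi] using isClosed_le continuous_const (hF i)
  obtain ⟨b, -, hb⟩ := isCompact_univ.inter_iInter_nonempty T hT fun u => by
    obtain ⟨N, hN⟩ := u.exists_nat_subset_range
    obtain ⟨x, hx⟩ := hpat N I
    refine ⟨x, mem_univ x, mem_iInter₂.2 fun i hi => ?_⟩
    by_cases hiI : i ∈ I
    · simpa [T, hiI] using (hx i (Finset.mem_range.1 (hN hi))).1 hiI
    · simpa [T, hiI] using (hx i (Finset.mem_range.1 (hN hi))).2 hiI
  refine ⟨b, ?_, ?_⟩ <;> ext n <;> have hbn := mem_iInter.1 hb n <;>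
    by_cases hn : n ∈ I <;> simp [T, hn] at hbn ⊢ <;> linarith

theorem exists_seq_of_forall_exists_append {α : Type*} (good : List α → Prop) (h₀ : good [])
    (hext : ∀ s, good s → ∃ a, good (s ++ [a])) :
    ∃ u : ℕ → α, ∀ N, good ((List.range N).map u) := by
  choose next hnext using hext
  let pre : ℕ → {s // good s} :=
    fun N => Nat.rec ⟨[], h₀⟩ (fun _ s => ⟨s.1 ++ [next s.1 s.2], hnext _ s.2⟩) N
  refine ⟨fun N => next (pre N).1 (pre N).2, fun N => ?_⟩
  suffices (pre N).1 = (List.range N).map fun N => next (pre N).1 (pre N).2 from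
    this ▸ (pre N).2
  induction N with
  | zero => rfl
  | succ N ih => rw [List.range_succ, List.map_append, ← ih]; rfl

def gapSide (a : ℕ → X → ℝ) (p q : ℝ) (c : ℕ × Bool) : Set X :=
  if c.2 then {x | a c.1 x < p} else {x | q < a c.1 x}

def gapCell (a : ℕ → X → ℝ) (p q : ℝ) (l : List (ℕ × Bool)) : Set X :=
  {x | ∀ c ∈ l, x ∈ gapSide a p q c}

theorem gapCell_append (a : ℕ → X → ℝ) (p q : ℝ) (l₁ l₂ : List (ℕ × Bool)) :
    gapCell a p q (l₁ ++ l₂) = gapCell a p q l₁ ∩ gapCell a p q l₂ := by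
  ext x
  simp [gapCell, or_imp, forall_and]

def Crosses (h : X → ℝ) (S : Set X) (p q : ℝ) : Prop :=
  (∃ u ∈ S, h u < p) ∧ ∃ v ∈ S, q < h v

theorem exists_seq_forall_pattern_of_crosses (a : ℕ → X → ℝ) (V : Filter ℕ) [V.NeBot]
    {p q : ℝ} {P : Set X} (hP : P.Nonempty)
    (hcross : ∀ l, (gapCell a p q l ∩ P).Nonempty →
      ∀ᶠ n in V, Crosses (a n) (gapCell a p q l ∩ P) p q) :
    ∃ u : ℕ → ℕ, ∀ (N : ℕ) (I : Set ℕ),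
      ∃ x, ∀ i < N, (i ∈ I → a (u i) x ≤ p) ∧ (i ∉ I → q ≤ a (u i) x) := by
  classical
  let good : List ℕ → Prop := fun s =>
    ∀ w : List Bool, w.length = s.length → (gapCell a p q (s.zip w) ∩ P).Nonempty
  have hext : ∀ s, good s → ∃ n, good (s ++ [n]) := by
    intro s hs
    obtain ⟨n, hn⟩ := ((eventually_all_finite (List.finite_length_eq Bool s.length)).2
      fun w hw => hcross _ (hs w hw)).exists
    refine ⟨n, fun w' hw' => ?_⟩
    obtain ⟨w, b, rfl⟩ := w'.eq_nil_or_concat'.resolve_left (by rintro rfl; simp at hw')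
    have hw : s.length = w.length := by simpa using hw'.symm
    rw [List.zip_append hw, gapCell_append, inter_right_comm]
    obtain ⟨⟨y, hy, hyp⟩, z, hz, hzq⟩ := hn w hw.symm
    cases b
    · exact ⟨z, hz, by simpa [gapCell, gapSide] using hzq⟩
    · exact ⟨y, hy, by simpa [gapCell, gapSide] using hyp⟩
  obtain ⟨u, hu⟩ := exists_seq_of_forall_exists_append good
    (fun w hw => by simpa [List.length_eq_zero_iff.1 hw, gapCell] using hP) hext
  refine ⟨u, fun N I => ?_⟩
  obtain ⟨x, hx, -⟩ := hu N ((List.range N).map fun i => decide (i ∈ I)) (by simp)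
  rw [List.zip_map'] at hx
  refine ⟨x, fun i hi => ?_⟩
  have hxi := hx _ (List.mem_map.2 ⟨i, List.mem_range.2 hi, rfl⟩)
  by_cases hiI : i ∈ I <;> simp [gapSide, hiI] at hxi ⊢ <;> exact hxi.le

theorem exists_cover_of_forall_nonempty {ι : Type*} (B : ι → Set X) (Φ : Set X → Prop)
    (h : ∀ P : Set X, P.Nonempty → ∃ i, (B i ∩ P).Nonempty ∧ Φ (B i ∩ P)) :
    ∃ c : ι → Set X, ∀ x, ∃ i, x ∈ B i ∩ c i ∧ Φ (B i ∩ c i) := by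
  classical
  let rest : Set (ι × Set X) → Set X := fun G => {x | ∀ j ∈ G, x ∉ B j.1 ∩ j.2}
  have rest_anti : ∀ {G G'}, G ⊆ G' → rest G' ⊆ rest G := fun hG _ hx j hj => hx j (hG hj)
  -- partial assignments `i ↦ S` in which every assigned `S` contains all still uncovered points
  let Adm : Set (Set (ι × Set X)) := {G | (∀ j ∈ G, ∀ k ∈ G, j.1 = k.1 → j = k) ∧
    ∀ j ∈ G, Φ (B j.1 ∩ j.2) ∧ rest G ⊆ j.2}
  obtain ⟨M, hM⟩ := zorn_subset Adm fun C hCA hC => by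
    refine ⟨⋃₀ C, ⟨?_, ?_⟩, fun G hG => subset_sUnion_of_mem hG⟩
    · rintro j ⟨G, hG, hjG⟩ k ⟨G', hG', hkG'⟩
      rcases hC.total hG hG' with hGG' | hG'G
      · exact (hCA hG').1 j (hGG' hjG) k hkG'
      · exact (hCA hG).1 j hjG k (hG'G hkG')
    · rintro j ⟨G, hG, hjG⟩
      exact ⟨((hCA hG).2 j hjG).1,
        (rest_anti (subset_sUnion_of_mem hG)).trans ((hCA hG).2 j hjG).2⟩
  have hrest : rest M = ∅ := by
    by_contra hne
    obtain ⟨i, ⟨x, hxB, hxP⟩, hΦ⟩ := h (rest M) (nonempty_iff_ne_empty.2 hne)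
    by_cases hi : ∃ S, (i, S) ∈ M
    · obtain ⟨S, hS⟩ := hi
      exact hxP _ hS ⟨hxB, (hM.prop.2 _ hS).2 hxP⟩
    refine hi ⟨rest M, hM.mem_of_prop_insert ⟨?_, ?_⟩⟩
    · rintro j (rfl | hj) k (rfl | hk) hjk
      · rfl
      · exact (hi ⟨k.2, by rw [show i = k.1 from hjk]; exact hk⟩).elim
      · exact (hi ⟨j.2, by rw [show i = j.1 from hjk.symm]; exact hj⟩).elim
      · exact hM.prop.1 j hj k hk hjk
    · have hsub := rest_anti (subset_insert (i, rest M) M)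
      rintro j (rfl | hj)
      · exact ⟨hΦ, hsub⟩
      · exact ⟨(hM.prop.2 j hj).1, hsub.trans (hM.prop.2 j hj).2⟩
  refine ⟨fun i => if hi : ∃ S, (i, S) ∈ M then hi.choose else ∅, fun x => ?_⟩
  obtain ⟨j, hj, hxj⟩ : ∃ j ∈ M, x ∈ B j.1 ∩ j.2 := by
    by_contra! hx
    exact (hrest ▸ hx : x ∈ (∅ : Set X))
  have hex : ∃ S, (j.1, S) ∈ M := ⟨j.2, hj⟩
  have hc : hex.choose = j.2 := congrArg Prod.snd (hM.prop.1 _ hex.choose_spec j hj rfl)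
  refine ⟨j.1, ?_, ?_⟩ <;> simp only [dif_pos hex, hc]
  exacts [hxj, (hM.prop.2 j hj).1]

theorem exists_seq_forall_eventually_mem {α : Type*} (l : Filter α) [l.NeBot]
    {𝒮 : Set (Set α)} (h𝒮 : 𝒮.Countable) :
    ∃ u : ℕ → α, ∀ s ∈ 𝒮, s ∈ l → ∀ᶠ k in atTop, u k ∈ s := by
  let G := generate (𝒮 ∩ l.sets)
  have : G.IsCountablyGenerated := ⟨⟨_, h𝒮.mono inter_subset_left, rfl⟩⟩
  have : G.NeBot := neBot_of_le (le_generate_iff.2 inter_subset_right)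
  obtain ⟨u, hu⟩ := G.exists_seq_tendsto
  exact ⟨u, fun s hs hsl => hu (mem_generate_of_mem ⟨hs, hsl⟩)⟩

theorem tendsto_of_forall_rat_eventually_le {v : ℕ → ℝ} {y : ℝ}
    (hlow : ∀ p : ℚ, (p : ℝ) < y → ∀ᶠ k in atTop, (p : ℝ) ≤ v k)
    (hup : ∀ q : ℚ, y < q → ∀ᶠ k in atTop, v k ≤ q) : Tendsto v atTop (𝓝 y) := by
  refine tendsto_order.2 ⟨fun b hb => ?_, fun b hb => ?_⟩
  · obtain ⟨p, hbp, hpy⟩ := exists_rat_btwn hb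
    exact (hlow p hpy).mono fun k hk => hbp.trans_le hk
  · obtain ⟨q, hyq, hqb⟩ := exists_rat_btwn hb
    exact (hup q hyq).mono fun k hk => hk.trans_lt hqb

theorem exists_subseq_tendsto_of_forall_not_crosses {ι : Type*} [Countable ι]
    (a : ℕ → X → ℝ) (V : Ultrafilter ℕ) {f : X → ℝ} (hf : ∀ x, Tendsto (a · x) V (𝓝 (f x)))
    (B : ℚ → ℚ → ι → Set X)
    (hB : ∀ p q : ℚ, p < q → ∀ P : Set X, P.Nonempty →
      ∃ i, (B p q i ∩ P).Nonempty ∧ {n | Crosses (a n) (B p q i ∩ P) p q} ∉ V) :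
    ∃ ns : ℕ → ℕ, ∀ x, Tendsto (fun k => a (ns k) x) atTop (𝓝 (f x)) := by
  have hc : ∀ p q : ℚ, ∃ c : ι → Set X, p < q →
      ∀ x, ∃ i, x ∈ B p q i ∩ c i ∧ {n | Crosses (a n) (B p q i ∩ c i) p q} ∉ V := by
    intro p q
    by_cases hpq : p < q
    · obtain ⟨c, hc⟩ := exists_cover_of_forall_nonempty (B p q)
        (fun S => {n | Crosses (a n) S p q} ∉ V) (hB p q hpq)
      exact ⟨c, fun _ => hc⟩
    · exact ⟨fun _ => ∅, fun h => absurd h hpq⟩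
  choose c hc using hc
  let E : ℚ × ℚ × ι → Set X := fun j => B j.1 j.2.1 j.2.2 ∩ c j.1 j.2.1 j.2.2
  let 𝒮 : Set (Set ℕ) := range (fun j => {n | ¬ Crosses (a n) (E j) j.1 j.2.1}) ∪
    range (fun j => {n | ∃ u ∈ E j, a n u < j.1}) ∪
    range (fun j => {n | ∃ v ∈ E j, j.2.1 < a n v})
  obtain ⟨ns, hns⟩ := exists_seq_forall_eventually_mem (V : Filter ℕ) (𝒮 := 𝒮)
    ((countable_range _).union (countable_range _) |>.union (countable_range _))
  -- Along `V`, `a n x` lies beyond a rational gap `(p, q)` next to `f x`; on the cell of the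
  -- cover containing `x`, `a n` does not cross that gap, so it stays on that side at `x`.
  refine ⟨ns, fun x => tendsto_of_forall_rat_eventually_le (fun p hp => ?_) fun q hq => ?_⟩
  · obtain ⟨q, hpq, hqx⟩ := exists_rat_btwn hp
    obtain ⟨i, hxE, hflat⟩ := hc p q (by exact_mod_cast hpq) x
    have hnc := hns _ (Or.inl (Or.inl ⟨(p, q, i), rfl⟩))
      (Ultrafilter.compl_mem_iff_notMem.2 hflat)
    have habove := hns _ (Or.inr ⟨(p, q, i), rfl⟩)
      (mem_of_superset ((hf x).eventually (lt_mem_nhds hqx)) fun n hn => ⟨x, hxE, hn⟩)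
    filter_upwards [hnc, habove] with k hk₁ hk₂
    by_contra! hk
    exact hk₁ ⟨⟨x, hxE, hk⟩, hk₂⟩
  · obtain ⟨p, hxp, hpq⟩ := exists_rat_btwn hq
    obtain ⟨i, hxE, hflat⟩ := hc p q (by exact_mod_cast hpq) x
    have hnc := hns _ (Or.inl (Or.inl ⟨(p, q, i), rfl⟩))
      (Ultrafilter.compl_mem_iff_notMem.2 hflat)
    have hbelow := hns _ (Or.inl (Or.inr ⟨(p, q, i), rfl⟩))
      (mem_of_superset ((hf x).eventually (gt_mem_nhds hxp)) fun n hn => ⟨x, hxE, hn⟩)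
    filter_upwards [hnc, hbelow] with k hk₁ hk₂
    by_contra! hk
    exact hk₁ ⟨hk₂, ⟨x, hxE, hk⟩⟩

theorem exists_subseq_tendsto_of_not_seqIndependent [TopologicalSpace X] [CompactSpace X]
    {a : ℕ → X → ℝ} (ha : ∀ n, Continuous (a n)) (hind : ¬ SeqIndependent (range a))
    (V : Ultrafilter ℕ) {f : X → ℝ} (hf : ∀ x, Tendsto (a · x) V (𝓝 (f x))) :
    ∃ ns : ℕ → ℕ, ∀ x, Tendsto (fun k => a (ns k) x) atTop (𝓝 (f x)) := by
  refine exists_subseq_tendsto_of_forall_not_crosses a V hf (fun p q => gapCell a p q)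
    fun p q hpq P hP => ?_
  by_contra! hcross
  obtain ⟨u, hu⟩ := exists_seq_forall_pattern_of_crosses a V hP hcross
  exact hind <| (seqIndependent_range_of_forall_pattern (fun i => ha (u i))
    (Rat.cast_lt.2 hpq) hu).mono (range_comp_subset_range u a)

theorem dense_setOf_eventually_eq {β : Type*} [TopologicalSpace β] {l : Filter ℕ}
    (hl : l ≤ cofinite) (b : β) : Dense {z : ℕ → β | ∀ᶠ n in l, z n = b} := by
  refine fun z => mem_closure_of_tendsto (b := atTop) (f := fun N n => if n < N then z n else b)
    (tendsto_pi_nhds.2 fun n => tendsto_const_nhds.congr' ?_) (Eventually.of_forall fun N => ?_)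
  · filter_upwards [eventually_gt_atTop n] with N hN
    simp [hN]
  · filter_upwards [hl (Nat.cofinite_eq_atTop ▸ eventually_ge_atTop N)] with n hn
    simp [hn.not_gt]

theorem continuousOn_decide_le [TopologicalSpace X] {h : X → ℝ} (hh : Continuous h)
    {r ε : ℝ} (hε : 0 < ε) :
    ContinuousOn (fun x => decide (h x ≤ r)) {x | h x ≤ r ∨ r + ε ≤ h x} := by
  set S := {x | h x ≤ r ∨ r + ε ≤ h x}
  have hS : Continuous fun y : S => h y := hh.comp continuous_subtype_val
  rw [continuousOn_iff_continuous_domRestrict]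
  convert (continuous_boolIndicator_iff_isClopen {y : S | h y ≤ r}).2
    ⟨isClosed_le hS continuous_const, ?_⟩ using 1
  · ext y
    simp [Set.boolIndicator]
  -- on `S`, the closed condition `h ≤ r` is also the open condition `h < r + ε`
  convert isOpen_lt hS continuous_const (g := fun _ => r + ε) using 1
  ext ⟨y, hy | hy⟩ <;> simp only [mem_ofPred_eq] <;> constructor <;> intro <;> linarith

theorem exists_tendsto_ultrafilter_of_abs_le {F : ℕ → X → ℝ} {C : ℝ}
    (hC : ∀ n x, |F n x| ≤ C) (U : Ultrafilter ℕ) :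
    ∃ L : X → ℝ, ∀ x, Tendsto (F · x) U (𝓝 (L x)) := by
  choose L _ hL using fun x => (isCompact_Icc (a := -C) (b := C)).ultrafilter_le_nhds
    (U.map (F · x)) (le_principal_iff.2 (mem_map.2 (univ_mem' fun n => abs_le.1 (hC n x))))
  exact ⟨L, hL⟩

theorem exists_not_eventually_eq_of_iUnion_isClosed {U : Ultrafilter ℕ}
    (hU : (U : Filter ℕ) ≤ cofinite) {ι : Type*} [Countable ι] {S : ι → Set (ℕ → Bool)}
    (hS : ∀ i, IsClosed (S i)) (hcover : ⋃ i, S i = univ) (β : ι → Bool) :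
    ∃ i, ∃ z ∈ S i, ¬ ∀ᶠ n in U, z n = β i := by
  obtain ⟨i, hi⟩ := nonempty_interior_of_iUnion_of_closed hS hcover
  obtain ⟨z, hzi, hz⟩ :=
    (dense_setOf_eventually_eq hU (!β i)).inter_open_nonempty _ isOpen_interior hi
  refine ⟨i, z, interior_subset hzi, fun hzβ => ?_⟩
  obtain ⟨n, hn₁, hn₂⟩ := (hzβ.and hz).exists
  simp [hn₁] at hn₂

theorem le_and_eventually_le_or_of_forall_le_or_le {u : ℕ → ℝ} {r ε l : ℝ}
    (hu : ∀ n, u n ≤ r ∨ r + ε ≤ u n) {U : Ultrafilter ℕ} (hl : Tendsto u U (𝓝 l)) :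
    (l ≤ r ∧ ∀ᶠ n in U, u n ≤ r) ∨ (r + ε ≤ l ∧ ∀ᶠ n in U, r + ε ≤ u n) :=
  (Ultrafilter.eventually_or.1 (Eventually.of_forall hu)).imp
    (fun h => ⟨le_of_tendsto hl h, h⟩) fun h => ⟨ge_of_tendsto hl h, h⟩

theorem exists_forall_le_or_le_and_decide_le_eq {F : ℕ → X → ℝ} {r ε : ℝ}
    (hb : ∀ I : Set ℕ, ∃ b, {n | F n b ≤ r} = I ∧ {n | r + ε ≤ F n b} = Iᶜ) (z : ℕ → Bool) :
    ∃ x, (∀ n, F n x ≤ r ∨ r + ε ≤ F n x) ∧ (fun n => decide (F n x ≤ r)) = z := by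
  obtain ⟨x, hxz, hxz'⟩ := hb {n | z n = true}
  refine ⟨x, fun n => ?_, funext fun n => Bool.eq_iff_iff.2 (by simpa using Set.ext_iff.1 hxz n)⟩
  by_cases hn : z n = true
  · exact Or.inl (hxz.symm ▸ hn : n ∈ {n | F n x ≤ r})
  · exact Or.inr (hxz'.symm ▸ hn : n ∈ {n | r + ε ≤ F n x})

theorem not_forall_tendsto_of_independent [TopologicalSpace X] [CompactSpace X]
    {F : ℕ → X → ℝ} (hF : ∀ n, Continuous (F n)) {r ε : ℝ} (hε : 0 < ε)
    (hb : ∀ I : Set ℕ, ∃ b, {n | F n b ≤ r} = I ∧ {n | r + ε ≤ F n b} = Iᶜ)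
    {U : Ultrafilter ℕ} (hU : (U : Filter ℕ) ≤ cofinite) {L : X → ℝ}
    (hL : ∀ x, Tendsto (F · x) U (𝓝 (L x))) {g : ℕ → X → ℝ} (hg : ∀ k, Continuous (g k)) :
    ¬ ∀ x, Tendsto (g · x) atTop (𝓝 (L x)) := by
  intro hgL
  let Y := {x | ∀ n, F n x ≤ r ∨ r + ε ≤ F n x}
  let σ : X → ℕ → Bool := fun x n => decide (F n x ≤ r)
  have hσ : ContinuousOn σ Y :=
    continuousOn_pi.2 fun n => (continuousOn_decide_le (hF n) hε).mono fun x hx => hx n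
  let W : ℕ × Bool → Set X := fun Kb =>
    Y ∩ {x | ∀ k ≥ Kb.1, if Kb.2 then g k x ≤ r + ε / 2 else r + ε / 2 ≤ g k x}
  have hWc : ∀ Kb, IsClosed (σ '' W Kb) := by
    rintro ⟨K, b⟩
    refine ((IsClosed.isCompact ?_).image_of_continuousOn (hσ.mono inter_subset_left)).isClosed
    refine IsClosed.inter ?_ ?_ <;> simp only [Y, ofPred_forall, ofPred_or]
    · exact isClosed_iInter fun n => (isClosed_le (hF n) continuous_const).union
        (isClosed_le continuous_const (hF n))
    refine isClosed_iInter fun k => isClosed_iInter fun _ => ?_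
    cases b
    · exact isClosed_le continuous_const (hg k)
    · exact isClosed_le (hg k) continuous_const
  have hcover : ⋃ Kb, σ '' W Kb = univ := by
    refine eq_univ_of_forall fun z => ?_
    obtain ⟨x, hxY, hσx⟩ := exists_forall_le_or_le_and_decide_le_eq hb z
    rcases le_and_eventually_le_or_of_forall_le_or_le hxY (hL x) with ⟨hLx, -⟩ | ⟨hLx, -⟩
    · obtain ⟨K, hK⟩ := eventually_atTop.1 <|
        (hgL x).eventually (gt_mem_nhds (by linarith : L x < r + ε / 2))
      exact mem_iUnion.2 ⟨(K, true), x, ⟨hxY, fun k hk => (hK k hk).le⟩, hσx⟩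
    · obtain ⟨K, hK⟩ := eventually_atTop.1 <|
        (hgL x).eventually (lt_mem_nhds (by linarith : r + ε / 2 < L x))
      exact mem_iUnion.2 ⟨(K, false), x, ⟨hxY, fun k hk => (hK k hk).le⟩, hσx⟩
  obtain ⟨⟨K, b⟩, -, ⟨x, ⟨hxY, hxK⟩, rfl⟩, hx⟩ :=
    exists_not_eventually_eq_of_iUnion_isClosed hU hWc hcover Prod.snd
  have hLK : ∀ᶠ k in atTop, if b then g k x ≤ r + ε / 2 else r + ε / 2 ≤ g k x :=
    eventually_atTop.2 ⟨K, hxK⟩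
  rcases le_and_eventually_le_or_of_forall_le_or_le hxY (hL x) with ⟨hLx, hFx⟩ | ⟨hLx, hFx⟩ <;>
    cases b
  · linarith [ge_of_tendsto (hgL x) hLK]
  · exact hx (hFx.mono fun n hn => by simpa [σ] using hn)
  · exact hx (hFx.mono fun n hn => by simpa [σ] using by linarith)
  · linarith [le_of_tendsto (hgL x) hLK]

theorem exists_seq_tendsto_of_mem_closure [TopologicalSpace X] [CompactSpace X]
    {A : Set C(X, ℝ)} (hA : A.Countable)
    (hind : ¬ SeqIndependent ((fun g : C(X, ℝ) => (g : X → ℝ)) '' A)) {f : X → ℝ}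
    (hf : f ∈ closure ((fun g : C(X, ℝ) => (g : X → ℝ)) '' A)) :
    ∃ g : ℕ → C(X, ℝ), (∀ n, g n ∈ A) ∧
      ∀ x, Tendsto (fun n => g n x) atTop (𝓝 (f x)) := by
  rcases A.eq_empty_or_nonempty with rfl | hne
  · simp at hf
  obtain ⟨a, rfl⟩ := hA.exists_eq_range hne
  rw [← range_comp] at hind hf
  have hcl : MapClusterPt f ⊤ fun n => ⇑(a n) := by
    rwa [mapClusterPt_def, map_top, ← mem_closure_iff_clusterPt]
  obtain ⟨V, -, hV⟩ := mapClusterPt_iff_ultrafilter.1 hcl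
  obtain ⟨ns, hns⟩ := exists_subseq_tendsto_of_not_seqIndependent (fun n => (a n).continuous)
    hind V (tendsto_pi_nhds.1 hV)
  exact ⟨a ∘ ns, fun k => mem_range_self _, hns⟩

theorem not_seqIndependent_of_forall_mem_closure [TopologicalSpace X] [CompactSpace X]
    {A : Set C(X, ℝ)} (hbd : ∃ C : ℝ, ∀ f ∈ A, ‖f‖ ≤ C)
    (h : ∀ f : X → ℝ, f ∈ closure ((fun g : C(X, ℝ) => (g : X → ℝ)) '' A) →
      ∃ g : ℕ → C(X, ℝ), (∀ n, g n ∈ A) ∧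
        ∀ x, Tendsto (fun n => g n x) atTop (𝓝 (f x))) :
    ¬ SeqIndependent ((fun g : C(X, ℝ) => (g : X → ℝ)) '' A) := by
  rintro ⟨F, hFA, r, ε, hε, hb⟩
  choose G hGA hGF using hFA
  obtain rfl : F = fun n => ⇑(G n) := funext fun n => (hGF n).symm
  obtain ⟨C, hC⟩ := hbd
  obtain ⟨L, hL⟩ := exists_tendsto_ultrafilter_of_abs_le
    (fun n x => ((G n).norm_coe_le_norm x).trans (hC _ (hGA n))) (hyperfilter ℕ)
  obtain ⟨g, -, hg⟩ := h L (mem_closure_of_tendsto (tendsto_pi_nhds.2 hL)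
    (Eventually.of_forall fun n => mem_image_of_mem _ (hGA n)))
  exact not_forall_tendsto_of_independent (fun n => (G n).continuous) hε hb
    hyperfilter_le_cofinite hL (fun k => (g k).continuous) hg

end

theorem stmt_3_general {X : Type*} [TopologicalSpace X] [CompactSpace X]
    (A : Set C(X, ℝ)) (hA : A.Countable) (hbd : ∃ C : ℝ, ∀ f ∈ A, ‖f‖ ≤ C) :
    (¬ SeqIndependent ((fun g : C(X, ℝ) => (g : X → ℝ)) '' A)) ↔
      (∀ f : X → ℝ, f ∈ closure ((fun g : C(X, ℝ) => (g : X → ℝ)) '' A) →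
        ∃ g : ℕ → C(X, ℝ), (∀ n, g n ∈ A) ∧
          ∀ x, Tendsto (fun n => g n x) atTop (𝓝 (f x))) :=
  ⟨fun hind _ hf => exists_seq_tendsto_of_mem_closure hA hind hf,
    not_seqIndependent_of_forall_mem_closure hbd⟩

/-- **Theorem 2.5 (Bourgain–Fremlin–Talagrand).** Let `X` be a compact Hausdorff space and
`A ⊆ C(X)` countable and uniformly bounded. Then `A` is sequentially dependent (as a subset
of `ℝ^X`) if and only if every function in the closure of `A` in `ℝ^X` (product topology)
is the pointwise limit of a sequence of elements of `A`. -/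
theorem stmt_3 {X : Type*} [TopologicalSpace X] [CompactSpace X] [T2Space X]
    (A : Set C(X, ℝ)) (hA : A.Countable) (hbd : ∃ C : ℝ, ∀ f ∈ A, ‖f‖ ≤ C) :
    (¬ SeqIndependent ((fun g : C(X, ℝ) => (g : X → ℝ)) '' A)) ↔
      (∀ f : X → ℝ, f ∈ closure ((fun g : C(X, ℝ) => (g : X → ℝ)) '' A) →
        ∃ g : ℕ → C(X, ℝ), (∀ n, g n ∈ A) ∧
          ∀ x, Tendsto (fun n => g n x) atTop (𝓝 (f x))) :=
  stmt_3_general A hA hbd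
end

section
/- Let T be a complete first-order theory in a countable language L, U a monster model of T (κ-saturated and strongly κ-homogeneous for a sufficiently large cardinal κ), M an elementary substructure of U with |M| < κ, and φ(x;y) a partitioned L-formula that is NIP. Then the evaluation map Eval : conv(𝔽_M^φ) × S_y(M) → [0,1] defined by Eval(g, p) = g(p) is dependent. -/
open FirstOrder Cardinal Set Filter Topology

/-! ### Monster model hypotheses -/

/-- `U` is `κ`-saturated: every set of formulas in finitely many object variables with
parameters from a set of size `< κ` which is finitely satisfiable in `U` is realized in `U`. -/
def IsSaturated (L : FirstOrder.Language.{0, 0}) (U : Type) [L.Structure U]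
    (κ : Cardinal.{0}) : Prop :=
  ∀ (ι : Type), #ι < κ → ∀ (c : ι → U) (n : ℕ) (S : Set (L.Formula (Fin n ⊕ ι))),
    (∀ s : Finset (L.Formula (Fin n ⊕ ι)), ↑s ⊆ S →
      ∃ a : Fin n → U, ∀ ψ ∈ s, ψ.Realize (Sum.elim a c)) →
    ∃ a : Fin n → U, ∀ ψ ∈ S, ψ.Realize (Sum.elim a c)

/-- `U` is strongly `κ`-homogeneous: any two tuples of length `< κ` with the same type
are conjugate under an automorphism of `U`. -/
def IsStronglyHomogeneous (L : FirstOrder.Language.{0, 0}) (U : Type) [L.Structure U]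
    (κ : Cardinal.{0}) : Prop :=
  ∀ (ι : Type), #ι < κ → ∀ a b : ι → U,
    (∀ ψ : L.Formula ι, ψ.Realize a ↔ ψ.Realize b) →
    ∃ σ : U ≃[L] U, ∀ i, σ (a i) = b i

variable {L : FirstOrder.Language.{0, 0}}

/-! ### NIP formulas -/

/-- The partitioned formula `φ(x;y)` has IP in `U`. -/
def FormulaHasIP (U : Type) [L.Structure U] {nx ny : ℕ}
    (φ : L.Formula (Fin nx ⊕ Fin ny)) : Prop :=
  ∀ n : ℕ, ∃ A : Finset (Fin nx → U), n ≤ A.card ∧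
    ∀ K ⊆ A, ∃ bK : Fin ny → U, ∀ c ∈ A, (φ.Realize (Sum.elim c bK) ↔ c ∈ K)

/-- The partitioned formula `φ(x;y)` is NIP in `U`. -/
def FormulaIsNIP (U : Type) [L.Structure U] {nx ny : ℕ}
    (φ : L.Formula (Fin nx ⊕ Fin ny)) : Prop :=
  ¬ FormulaHasIP U φ

/-! ### `φ`-definable sets and local Keisler measures -/

/-- The instance `φ(x;b)` of `φ(x;y)`, as a subset of `U^x`. -/
def phiSet {U : Type} [L.Structure U] {nx ny : ℕ}
    (φ : L.Formula (Fin nx ⊕ Fin ny)) (b : Fin ny → U) : Set (Fin nx → U) :=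
  { a | φ.Realize (Sum.elim a b) }

/-- The Boolean algebra `Def_φ(U)` of subsets of `U^x` generated by the instances
`φ(x;b)`, `b ∈ U^y`. -/
inductive InPhiAlg {U : Type} [L.Structure U] {nx ny : ℕ}
    (φ : L.Formula (Fin nx ⊕ Fin ny)) : Set (Fin nx → U) → Prop
  | basic (b : Fin ny → U) : InPhiAlg φ (phiSet φ b)
  | empty : InPhiAlg φ ∅
  | compl {s : Set (Fin nx → U)} : InPhiAlg φ s → InPhiAlg φ sᶜ
  | union {s t : Set (Fin nx → U)} : InPhiAlg φ s → InPhiAlg φ t → InPhiAlg φ (s ∪ t)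

/-- A finitely additive probability measure on `Def_φ(U)`, i.e. an element of `𝔐_φ(U)`. -/
structure KeislerMeasure (U : Type) [L.Structure U] {nx ny : ℕ}
    (φ : L.Formula (Fin nx ⊕ Fin ny)) where
  toFun : Set (Fin nx → U) → ℝ
  nonneg : ∀ s, InPhiAlg φ s → 0 ≤ toFun s
  total : toFun Set.univ = 1
  additive : ∀ s t, InPhiAlg φ s → InPhiAlg φ t → Disjoint s t →
    toFun (s ∪ t) = toFun s + toFun t

/-! ### Types over `M` and the Stone space `S_y(M)` -/

/-- `b` and `c` have the same type over `M`. -/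
def SameTypeOver {U : Type} [L.Structure U] (M : L.ElementarySubstructure U) {n : ℕ}
    (b c : Fin n → U) : Prop :=
  ∀ (k : ℕ) (ψ : L.Formula (Fin n ⊕ Fin k)) (m : Fin k → M),
    (ψ.Realize (Sum.elim b (fun i => (m i : U))) ↔
      ψ.Realize (Sum.elim c (fun i => (m i : U))))

/-- The setoid of "equality of type over `M`". -/
def typeSetoid {U : Type} [L.Structure U] (M : L.ElementarySubstructure U) (n : ℕ) :
    Setoid (Fin n → U) where
  r := SameTypeOver M
  iseqv := ⟨fun _ _ _ _ => Iff.rfl, fun h k ψ m => (h k ψ m).symm,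
    fun h h' k ψ m => (h k ψ m).trans (h' k ψ m)⟩

/-- The space `S_n(M)` of complete `n`-types over `M` (realized in the monster `U`). -/
def TypeSpace {U : Type} [L.Structure U] (M : L.ElementarySubstructure U) (n : ℕ) : Type :=
  Quotient (typeSetoid M n)

/-- The Stone topology on `S_n(M)`, generated by the sets of types containing a given
formula over `M`. -/
instance typeSpaceTopology {U : Type} [L.Structure U] (M : L.ElementarySubstructure U)
    (n : ℕ) : TopologicalSpace (TypeSpace M n) :=
  TopologicalSpace.generateFrom
    { S | ∃ (k : ℕ) (ψ : L.Formula (Fin n ⊕ Fin k)) (m : Fin k → M),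
        S = { p : TypeSpace M n | ∃ b : Fin n → U,
          Quotient.mk (typeSetoid M n) b = p ∧
            ψ.Realize (Sum.elim b (fun i => (m i : U))) } }

/-- The function `F_a^φ : S_y(M) → ℝ`, the indicator of `φ(a;y) ∈ p` for `a ∈ M^x`. -/
noncomputable def FunF {U : Type} [L.Structure U] {nx ny : ℕ}
    (φ : L.Formula (Fin nx ⊕ Fin ny)) (M : L.ElementarySubstructure U)
    (a : Fin nx → M) (p : TypeSpace M ny) : ℝ :=
  Set.indicator
    { q : TypeSpace M ny | ∃ b : Fin ny → U, Quotient.mk (typeSetoid M ny) b = q ∧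
        φ.Realize (Sum.elim (fun i => (a i : U)) b) } (fun _ => 1) p

/-- The family `𝔽_M^φ = {F_a^φ : a ∈ M^x}` of functions on `S_y(M)`. -/
def FamilyF {U : Type} [L.Structure U] {nx ny : ℕ}
    (φ : L.Formula (Fin nx ⊕ Fin ny)) (M : L.ElementarySubstructure U) :
    Set (TypeSpace M ny → ℝ) :=
  Set.range (fun a : Fin nx → M => FunF φ M a)

/-- The function `F_μ^φ : S_y(M) → ℝ`, `p ↦ μ(φ(x;b))` for `b ⊨ p` (well defined when `μ`
is `φ`-invariant over `M`). -/
noncomputable def FunMu {U : Type} [L.Structure U] {nx ny : ℕ}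
    (φ : L.Formula (Fin nx ⊕ Fin ny)) (M : L.ElementarySubstructure U)
    (μ : KeislerMeasure U φ) (p : TypeSpace M ny) : ℝ :=
  μ.toFun (phiSet φ (Quotient.out p))

/-! ### Properties of local Keisler measures -/

/-- `μ` is `φ`-invariant over `M`. -/
def PhiInvariant {U : Type} [L.Structure U] {nx ny : ℕ}
    (φ : L.Formula (Fin nx ⊕ Fin ny)) (M : L.ElementarySubstructure U)
    (μ : KeislerMeasure U φ) : Prop :=
  ∀ b c : Fin ny → U, SameTypeOver M b c → μ.toFun (phiSet φ b) = μ.toFun (phiSet φ c)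

/-- `μ` is `M`-invariant: automorphisms of `U` fixing `M` pointwise preserve the measure of
every set in `Def_φ(U)`. -/
def MInvariant {U : Type} [L.Structure U] {nx ny : ℕ}
    (φ : L.Formula (Fin nx ⊕ Fin ny)) (M : L.ElementarySubstructure U)
    (μ : KeislerMeasure U φ) : Prop :=
  ∀ σ : U ≃[L] U, (∀ m : M, σ (m : U) = (m : U)) → ∀ s : Set (Fin nx → U), InPhiAlg φ s →
    μ.toFun ((fun a : Fin nx → U => (σ : U → U) ∘ a) '' s) = μ.toFun s

/-- `μ` is `φ`-definable over `M` (Definition 4.3(i)). -/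
def PhiDefinable {U : Type} [L.Structure U] {nx ny : ℕ}
    (φ : L.Formula (Fin nx ⊕ Fin ny)) (M : L.ElementarySubstructure U)
    (μ : KeislerMeasure U φ) : Prop :=
  ∀ ε : ℝ, 0 < ε → ∃ (m k : ℕ) (ψ : Fin m → L.Formula (Fin ny ⊕ Fin k)) (c : Fin k → M),
    (∀ b : Fin ny → U, ∃! i : Fin m, (ψ i).Realize (Sum.elim b (fun j => (c j : U)))) ∧
    ∀ i : Fin m, ∀ e e' : Fin ny → U,
      (ψ i).Realize (Sum.elim e (fun j => (c j : U))) →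
      (ψ i).Realize (Sum.elim e' (fun j => (c j : U))) →
      |μ.toFun (phiSet φ e) - μ.toFun (phiSet φ e')| < ε

/-- `μ` is finitely satisfiable over `M`: every `φ`-formula of positive measure has a
realization in `M`. -/
def FinSat {U : Type} [L.Structure U] {nx ny : ℕ}
    (φ : L.Formula (Fin nx ⊕ Fin ny)) (M : L.ElementarySubstructure U)
    (μ : KeislerMeasure U φ) : Prop :=
  ∀ s : Set (Fin nx → U), InPhiAlg φ s → 0 < μ.toFun s →
    ∃ a : Fin nx → M, (fun i => (a i : U)) ∈ s

/-- `μ` is `φ`-generically stable over `M` (Definition 4.3(iii)). -/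
def PhiGenericallyStable {U : Type} [L.Structure U] {nx ny : ℕ}
    (φ : L.Formula (Fin nx ⊕ Fin ny)) (M : L.ElementarySubstructure U)
    (μ : KeislerMeasure U φ) : Prop :=
  PhiDefinable φ M μ ∧ FinSat φ M μ

/-! ### The algebra `Δ_φ` of partitioned formulas and full generic stability -/

/-- The family `Δ_φ` of Boolean combinations `θ(x; y_1, ..., y_k)` of the formulas
`φ(x;y_i)`, viewed as set-valued maps on tuples of parameters. -/
inductive InDeltaPhi {U : Type} [L.Structure U] {nx ny : ℕ}
    (φ : L.Formula (Fin nx ⊕ Fin ny)) :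
    (k : ℕ) → ((Fin k → Fin ny → U) → Set (Fin nx → U)) → Prop
  | inst (k : ℕ) (j : Fin k) : InDeltaPhi φ k (fun bs => phiSet φ (bs j))
  | empty (k : ℕ) : InDeltaPhi φ k (fun _ => ∅)
  | compl {k : ℕ} {G} : InDeltaPhi φ k G → InDeltaPhi φ k (fun bs => (G bs)ᶜ)
  | union {k : ℕ} {G H} : InDeltaPhi φ k G → InDeltaPhi φ k H →
      InDeltaPhi φ k (fun bs => G bs ∪ H bs)

/-- `μ` is definable over `M` (Definition 4.11): for every `θ(x;ȳ) ∈ Δ_φ` and `ε > 0` there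
is a partition of `U^ȳ` into `M`-definable pieces on which `μ(θ(x;·))` varies less than `ε`. -/
def DefinableOver {U : Type} [L.Structure U] {nx ny : ℕ}
    (φ : L.Formula (Fin nx ⊕ Fin ny)) (M : L.ElementarySubstructure U)
    (μ : KeislerMeasure U φ) : Prop :=
  ∀ (k : ℕ) (G : (Fin k → Fin ny → U) → Set (Fin nx → U)), InDeltaPhi φ k G →
    ∀ ε : ℝ, 0 < ε →
      ∃ (m j : ℕ) (ρ : Fin m → L.Formula ((Fin k × Fin ny) ⊕ Fin j)) (c : Fin j → M),
        (∀ bs : Fin k → Fin ny → U, ∃! i : Fin m,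
          (ρ i).Realize (Sum.elim (fun q => bs q.1 q.2) (fun t => (c t : U)))) ∧
        ∀ i : Fin m, ∀ e e' : Fin k → Fin ny → U,
          (ρ i).Realize (Sum.elim (fun q => e q.1 q.2) (fun t => (c t : U))) →
          (ρ i).Realize (Sum.elim (fun q => e' q.1 q.2) (fun t => (c t : U))) →
          |μ.toFun (G e) - μ.toFun (G e')| < ε

/-- `μ` is generically stable over `M` (Definition 4.11). -/
def GenericallyStable {U : Type} [L.Structure U] {nx ny : ℕ}
    (φ : L.Formula (Fin nx ⊕ Fin ny)) (M : L.ElementarySubstructure U)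
    (μ : KeislerMeasure U φ) : Prop :=
  DefinableOver φ M μ ∧ FinSat φ M μ

/-- The average measure `Av(ā)` of the finite sequence `ā = (a_1, ..., a_n)`. -/
noncomputable def Av {α : Type*} {n : ℕ} (a : Fin n → α) (s : Set α) : ℝ :=
  (∑ i : Fin n, Set.indicator s (fun _ => (1 : ℝ)) (a i)) / n

/-- `μ` is finitely approximable over `M` (Definition 4.12). -/
def FinApprox {U : Type} [L.Structure U] {nx ny : ℕ}
    (φ : L.Formula (Fin nx ⊕ Fin ny)) (M : L.ElementarySubstructure U)
    (μ : KeislerMeasure U φ) : Prop :=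
  ∀ (k : ℕ) (G : (Fin k → Fin ny → U) → Set (Fin nx → U)), InDeltaPhi φ k G →
    ∀ ε : ℝ, 0 < ε → ∃ (n : ℕ), 0 < n ∧ ∃ a : Fin n → (Fin nx → M),
      ∀ bs : Fin k → Fin ny → U,
        |μ.toFun (G bs) - Av (fun i => fun q => ((a i q : U))) (G bs)| < ε

/-! ### Convexity and dependence notions -/

/-- The set of all finite rational convex combinations of elements of `A`. -/
def ratConv {E : Type*} [AddCommMonoid E] [Module ℝ E] (A : Set E) : Set E :=
  { z | ∃ (n : ℕ) (r : Fin n → ℚ) (v : Fin n → E),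
      (∀ i, 0 < r i) ∧ (∑ i, ((r i : ℝ))) = 1 ∧ (∀ i, v i ∈ A) ∧ z = ∑ i, ((r i : ℝ)) • v i }

/-- A two-variable map `g : X × Y → ℝ` is `(r,ε)`-independent if for every `n` there is a
set `A ⊆ X` with `|A| > n` which `g` `(r,ε)`-shatters; `g` is independent if it is
`(r,ε)`-independent for some `r ∈ (0,1)` and `ε > 0`, and dependent otherwise. -/
def MapIndependent {X Y : Type*} (g : X → Y → ℝ) : Prop :=
  ∃ r : ℝ, r ∈ Set.Ioo (0 : ℝ) 1 ∧ ∃ ε : ℝ, 0 < ε ∧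
    ∀ n : ℕ, ∃ A : Finset X, n < A.card ∧
      ∀ K ⊆ A, ∃ b : Y, ∀ a ∈ A, (g a b ≤ r ↔ a ∈ K) ∧ (r + ε ≤ g a b ↔ a ∉ K)

/-!
Suppose `Eval` `(r, ε)`-shatters a set `A` of `N` convex combinations of the indicators `F_a`,
with a type `p_K` witnessing each `K ⊆ A`. By Hoeffding's inequality and a union bound over the
`2^N` types, every `g ∈ A` is within `ε / 2` of an average of `m = O(N)` of its own indicators at
all the `p_K` simultaneously. On the set `S` of the at most `N m` sampled parameters the traces of
the instances `φ(x; p_K)` then determine `K`, so `φ` cuts out `2^N` distinct subsets of `S`. For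
NIP `φ` the Sauer–Shelah lemma bounds this number polynomially in `|S|`, which fails for large `N`.
-/

open MeasureTheory ProbabilityTheory Real

section Sampling

variable {Ω : Type*} [MeasurableSpace Ω] (μ : Measure Ω) [IsProbabilityMeasure μ]

lemma measureReal_le_sum_sub_le {h : Ω → ℝ} (hm : Measurable h)
    (h01 : ∀ ω, h ω ∈ Icc (0 : ℝ) 1) (m : ℕ) {ε : ℝ} (hε : 0 ≤ ε) :
    (Measure.pi fun _ : Fin m => μ).real {ω | m * ε ≤ ∑ i, h (ω i) - m * ∫ x, h x ∂μ}
      ≤ exp (-2 * m * ε ^ 2) := by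
  have hint (i : Fin m) : ∫ ω, h (ω i) ∂(Measure.pi fun _ : Fin m => μ) = ∫ x, h x ∂μ := by
    conv_rhs => rw [← (measurePreserving_eval (fun _ : Fin m => μ) i).map_eq]
    exact (integral_map (measurable_pi_apply i).aemeasurable hm.aestronglyMeasurable).symm
  have hsubG : ∀ i ∈ Finset.univ,
      HasSubgaussianMGF (fun ω : Fin m → Ω => h (ω i) - ∫ x, h x ∂μ)
        ((‖(1 : ℝ) - 0‖₊ / 2) ^ 2) (Measure.pi fun _ : Fin m => μ) := by
    intro i _
    rw [← hint i]
    exact hasSubgaussianMGF_of_mem_Icc (hm.comp (measurable_pi_apply i)).aemeasurable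
      (.of_forall fun ω => h01 (ω i))
  have hindep : iIndepFun (fun (i : Fin m) (ω : Fin m → Ω) => h (ω i) - ∫ x, h x ∂μ)
      (Measure.pi fun _ : Fin m => μ) :=
    iIndepFun_pi (X := fun _ x => h x - ∫ x, h x ∂μ) fun _ => (hm.sub_const _).aemeasurable
  have hoeffding :=
    HasSubgaussianMGF.measure_sum_ge_le_of_iIndepFun hindep hsubG (ε := m * ε) (by positivity)
  simp only [Finset.sum_sub_distrib, Finset.sum_const, Finset.card_univ, Fintype.card_fin,
    nsmul_eq_mul] at hoeffding
  refine hoeffding.trans_eq (congrArg exp ?_)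
  rcases eq_or_ne m 0 with rfl | hm0
  · simp
  · simp only [sub_zero, nnnorm_one, one_div, inv_pow, NNReal.coe_mul, NNReal.coe_natCast,
      NNReal.coe_inv, NNReal.coe_pow, NNReal.coe_ofNat, neg_mul]
    field_simp

lemma measureReal_le_abs_sum_sub_le {h : Ω → ℝ} (hm : Measurable h)
    (h01 : ∀ ω, h ω ∈ Icc (0 : ℝ) 1) (m : ℕ) {ε : ℝ} (hε : 0 ≤ ε) :
    (Measure.pi fun _ : Fin m => μ).real {ω | m * ε ≤ |∑ i, h (ω i) - m * ∫ x, h x ∂μ|}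
      ≤ 2 * exp (-2 * m * ε ^ 2) := by
  have h01' (ω : Ω) : 1 - h ω ∈ Icc (0 : ℝ) 1 := by
    obtain ⟨h0, h1⟩ := h01 ω
    constructor <;> linarith
  have hint : ∫ x, (1 - h x) ∂μ = 1 - ∫ x, h x ∂μ := by
    rw [integral_sub (integrable_const 1) (.of_mem_Icc 0 1 hm.aemeasurable (.of_forall h01))]
    simp
  have hsplit : {ω : Fin m → Ω | m * ε ≤ |∑ i, h (ω i) - m * ∫ x, h x ∂μ|}
      ⊆ {ω | m * ε ≤ ∑ i, h (ω i) - m * ∫ x, h x ∂μ}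
        ∪ {ω | m * ε ≤ ∑ i, (1 - h (ω i)) - m * ∫ x, (1 - h x) ∂μ} := by
    intro ω hω
    simp only [mem_ofPred_eq, mem_union, hint, Finset.sum_sub_distrib, Finset.sum_const,
      Finset.card_univ, Fintype.card_fin, nsmul_eq_mul, mul_one] at hω ⊢
    rcases le_abs'.mp hω with h | h
    · right; linarith
    · left; linarith
  calc _ ≤ _ := measureReal_mono hsplit
    _ ≤ _ := measureReal_union_le _ _
    _ ≤ exp (-2 * m * ε ^ 2) + exp (-2 * m * ε ^ 2) :=
      add_le_add (measureReal_le_sum_sub_le μ hm h01 m hε)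
        (measureReal_le_sum_sub_le μ (measurable_const.sub hm) h01' m hε)
    _ = 2 * exp (-2 * m * ε ^ 2) := by ring

lemma exists_forall_abs_sum_sub_lt {β : Type*} (h : Ω → β → ℝ) (hm : ∀ b, Measurable (h · b))
    (h01 : ∀ ω b, h ω b ∈ Icc (0 : ℝ) 1) (B : Finset β) {m : ℕ} {ε : ℝ} (hε : 0 ≤ ε)
    (hB : 2 * B.card * exp (-2 * m * ε ^ 2) < 1) :
    ∃ ω : Fin m → Ω, ∀ b ∈ B, |∑ i, h (ω i) b - m * ∫ x, h x b ∂μ| < m * ε := by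
  by_contra! hbad
  have hcover : (univ : Set (Fin m → Ω))
      ⊆ ⋃ b ∈ B, {ω | m * ε ≤ |∑ i, h (ω i) b - m * ∫ x, h x b ∂μ|} := fun ω _ =>
    let ⟨b, hb, hω⟩ := hbad ω
    mem_biUnion hb hω
  have hunion := (measureReal_mono (μ := Measure.pi fun _ : Fin m => μ) hcover
    (measure_ne_top _ _)).trans (measureReal_biUnion_finset_le _ _)
  rw [probReal_univ] at hunion
  have := hunion.trans (Finset.sum_le_sum fun b _ =>
    measureReal_le_abs_sum_sub_le μ (hm b) (h01 · b) m hε)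
  rw [Finset.sum_const, nsmul_eq_mul] at this
  linarith

end Sampling

lemma exists_sum_approx_of_mem_convexHull_range {X β : Type*} {F : X → β → ℝ}
    (hF : ∀ x b, F x b ∈ Icc (0 : ℝ) 1) {g : β → ℝ} (hg : g ∈ convexHull ℝ (range F))
    (B : Finset β) {m : ℕ} {ε : ℝ} (hε : 0 ≤ ε) (hB : 2 * B.card * exp (-2 * m * ε ^ 2) < 1) :
    ∃ x : Fin m → X, ∀ b ∈ B, |∑ i, F (x i) b - m * g b| < m * ε := by
  obtain ⟨ι, _, w, z, hw0, hw1, hz, rfl⟩ := mem_convexHull_iff_exists_fintype.mp hg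
  choose x hx using hz
  let _ : MeasurableSpace ι := ⊤
  let p : PMF ι := PMF.ofFintype (fun i => ENNReal.ofReal (w i)) (by
    rw [← ENNReal.ofReal_sum_of_nonneg fun i _ => hw0 i, hw1, ENNReal.ofReal_one])
  have hmean (b : β) : ∫ i, F (x i) b ∂p.toMeasure = (∑ i, w i • z i) b := by
    simp [p, PMF.integral_eq_sum, ENNReal.toReal_ofReal (hw0 _), hx]
  obtain ⟨ω, hω⟩ := exists_forall_abs_sum_sub_lt p.toMeasure (fun i b => F (x i) b)
    (fun _ => measurable_from_top) (fun i => hF (x i)) B hε hB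
  exact ⟨fun i => x (ω i), fun b hb => hmean b ▸ hω b hb⟩

section Shattering

variable {X Y : Type*}

def RelShatters (R : X → Y → Prop) (s : Finset X) : Prop :=
  ∀ K ⊆ s, ∃ y, ∀ x ∈ s, (R x y ↔ x ∈ K)

lemma RelShatters.map {X' Y' : Type*} {R' : X' → Y' → Prop} {R : X → Y → Prop} (f : X' ↪ X)
    (g : Y' → Y) (hfg : ∀ x y, R' x y ↔ R (f x) (g y)) {s : Finset X'} (hs : RelShatters R' s) :
    RelShatters R (s.map f) := by
  classical
  intro K _
  obtain ⟨y, hy⟩ := hs (s.filter (f · ∈ K)) (Finset.filter_subset _ _)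
  refine ⟨g y, fun x hx => ?_⟩
  obtain ⟨x', hx', rfl⟩ := Finset.mem_map.1 hx
  rw [← hfg, hy x' hx', Finset.mem_filter, and_iff_right hx']

lemma Finset.card_le_mul_pow_of_shatters_card_lt {α : Type*} [DecidableEq α]
    {𝒜 : Finset (Finset α)} {S : Finset α} {d : ℕ} (h𝒜 : ∀ t ∈ 𝒜, t ⊆ S)
    (hd : ∀ s, 𝒜.Shatters s → s.card < d) : 𝒜.card ≤ d * (S.card + 1) ^ d := by
  have hsub : 𝒜.shatterer ⊆ (Finset.range d).biUnion fun i => S.powersetCard i := by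
    intro s hs
    rw [Finset.mem_shatterer] at hs
    obtain ⟨t, ht, hst⟩ := hs.exists_superset
    exact Finset.mem_biUnion.2 ⟨s.card, Finset.mem_range.2 (hd s hs),
      Finset.mem_powersetCard.2 ⟨hst.trans (h𝒜 t ht), rfl⟩⟩
  calc 𝒜.card ≤ 𝒜.shatterer.card := Finset.card_le_card_shatterer 𝒜
    _ ≤ ∑ i ∈ Finset.range d, (S.powersetCard i).card :=
      (Finset.card_le_card hsub).trans Finset.card_biUnion_le
    _ ≤ ∑ _i ∈ Finset.range d, (S.card + 1) ^ d := Finset.sum_le_sum fun i hi => by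
      rw [Finset.card_powersetCard]
      calc S.card.choose i ≤ S.card ^ i := Nat.choose_le_pow _ _
        _ ≤ (S.card + 1) ^ i := Nat.pow_le_pow_left (Nat.le_succ _) i
        _ ≤ (S.card + 1) ^ d := Nat.pow_le_pow_right (Nat.succ_pos _) (Finset.mem_range.1 hi).le
    _ = d * (S.card + 1) ^ d := by
      rw [Finset.sum_const, Finset.card_range, smul_eq_mul]

lemma card_image_filter_le_of_relShatters_card_lt [DecidableEq X] {R : X → Y → Prop}
    [DecidableRel R] {d : ℕ} (hR : ∀ s, RelShatters R s → s.card < d) {ι : Type*}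
    (I : Finset ι) (y : ι → Y) (S : Finset X) : (I.image fun i => S.filter (R · (y i))).card ≤ d * (S.card + 1) ^ d := by
  refine Finset.card_le_mul_pow_of_shatters_card_lt (by simp) fun s hs => hR s fun K hK => ?_
  obtain ⟨u, hu, hsu⟩ := hs hK
  obtain ⟨t, ht, hst⟩ := hs.exists_superset
  obtain ⟨i, -, rfl⟩ := Finset.mem_image.1 hu
  obtain ⟨j, -, rfl⟩ := Finset.mem_image.1 ht
  refine ⟨y i, fun x hx => ?_⟩
  rw [← hsu, Finset.mem_inter, Finset.mem_filter]
  have := (Finset.mem_filter.1 (hst hx)).1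
  tauto

def relIndicators (R : X → Y → Prop) : Set (Y → ℝ) :=
  range fun x => {y | R x y}.indicator fun _ => 1

lemma exists_samples_of_shatters {R : X → Y → Prop} [DecidableRel R] {r ε : ℝ} (hε : 0 < ε)
    (A : Finset (convexHull ℝ (relIndicators R)))
    (hA : ∀ K ⊆ A, ∃ y, ∀ g ∈ A, (g ∈ K → (g : Y → ℝ) y ≤ r) ∧ (g ∉ K → r + ε ≤ (g : Y → ℝ) y))
    {m : ℕ} (hm : 2 * 2 ^ A.card * exp (-2 * m * (ε / 2) ^ 2) < 1) :
    ∃ (y : A.powerset → Y) (x : A → Fin m → X), ∀ (g : A) (K : A.powerset),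
      (g : convexHull ℝ (relIndicators R)) ∈ (K : Finset _) ↔
        ((Finset.univ.filter fun i => R (x g i) (y K)).card : ℝ) < m * (r + ε / 2) := by
  classical
  set F : X → Y → ℝ := fun x => {y | R x y}.indicator fun _ => 1
  have hF (x : X) (y : Y) : F x y ∈ Icc (0 : ℝ) 1 := by
    by_cases h : R x y <;> simp [F, h]
  choose y hy using fun K : A.powerset => hA K (Finset.mem_powerset.1 K.2)
  have hB : 2 * (Finset.univ.image y).card * exp (-2 * m * (ε / 2) ^ 2) < 1 := by
    refine lt_of_le_of_lt ?_ hm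
    gcongr
    calc ((Finset.univ.image y).card : ℝ) ≤ (Finset.univ : Finset A.powerset).card := by
          exact_mod_cast Finset.card_image_le
      _ = 2 ^ A.card := by simp
  choose x hx using fun g : A =>
    exists_sum_approx_of_mem_convexHull_range hF (g : convexHull ℝ (relIndicators R)).2
      (Finset.univ.image y) (half_pos hε).le hB
  refine ⟨y, x, fun g K => ?_⟩
  have hcount : ∑ i, F (x g i) (y K) = (Finset.univ.filter fun i => R (x g i) (y K)).card := by
    simp [F, indicator_apply, Finset.sum_boole]
  have h := abs_lt.1 (hx g (y K) (Finset.mem_image_of_mem y (Finset.mem_univ K)))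
  rw [hcount] at h
  obtain ⟨hin, hout⟩ := hy K g g.2
  have hm0 : (0 : ℝ) ≤ m := m.cast_nonneg
  constructor
  · intro hg
    nlinarith [hin hg]
  · intro hlt
    by_contra hg
    nlinarith [hout hg]

lemma two_pow_card_le_of_forall_mem_iff [DecidableEq X] {R : X → Y → Prop} [DecidableRel R]
    {d : ℕ} (hR : ∀ s, RelShatters R s → s.card < d) {ι : Type*} (A : Finset ι) {m : ℕ}
    (y : A.powerset → Y) (x : A → Fin m → X) {c : ℝ}
    (hsep : ∀ (g : A) (K : A.powerset), (g : ι) ∈ (K : Finset ι) ↔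
      ((Finset.univ.filter fun i => R (x g i) (y K)).card : ℝ) < c) :
    2 ^ A.card ≤ d * (A.card * m + 1) ^ d := by
  set S : Finset X := Finset.univ.biUnion fun g : A => Finset.univ.image (x g)
  set trace : A.powerset → Finset X := fun K => S.filter (R · (y K))
  have hcount (g : A) (K : A.powerset) : (Finset.univ.filter fun i => R (x g i) (y K)) =
      Finset.univ.filter fun i => x g i ∈ trace K := by
    refine Finset.filter_congr fun i _ => ?_
    have hS : x g i ∈ S :=
      Finset.mem_biUnion.2 ⟨g, Finset.mem_univ _, Finset.mem_image_of_mem _ (Finset.mem_univ i)⟩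
    simp [trace, hS]
  have hsub (K₁ K₂ : A.powerset) (h : trace K₁ = trace K₂) : (K₁ : Finset ι) ⊆ K₂ := by
    intro a ha
    have haA : a ∈ A := Finset.mem_powerset.1 K₁.2 ha
    rw [hsep ⟨a, haA⟩ K₂, hcount, ← h, ← hcount, ← hsep]
    exact ha
  have hinj : Function.Injective trace := fun K₁ K₂ h =>
    Subtype.ext (Finset.Subset.antisymm (hsub K₁ K₂ h) (hsub K₂ K₁ h.symm))
  have hScard : S.card ≤ A.card * m := by
    calc S.card ≤ ∑ g : A, (Finset.univ.image (x g)).card := Finset.card_biUnion_le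
      _ ≤ ∑ _g : A, m := Finset.sum_le_sum fun g _ => Finset.card_image_le.trans (by simp)
      _ = A.card * m := by simp
  calc 2 ^ A.card = (Finset.univ.image trace).card := by
        simp [Finset.card_image_of_injective _ hinj]
    _ ≤ d * (S.card + 1) ^ d := card_image_filter_le_of_relShatters_card_lt hR Finset.univ y S
    _ ≤ d * (A.card * m + 1) ^ d := by gcongr

/-- `m = ⌈2 / ε²⌉ (N + 1)` samples make Hoeffding's union bound over `2 ^ N` types effective,
while `d (N m + 1) ^ d` stays polynomial in `N`. -/
lemma exists_exp_bound_lt_one_and_pow_lt_two_pow (d : ℕ) {ε : ℝ} (hε : 0 < ε) :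
    ∃ N m : ℕ, 2 * 2 ^ N * exp (-2 * m * (ε / 2) ^ 2) < 1 ∧ d * (N * m + 1) ^ d < 2 ^ N := by
  set c : ℕ := ⌈2 / ε ^ 2⌉₊
  have hexp (N : ℕ) : 2 * 2 ^ N * exp (-2 * (c * (N + 1) : ℕ) * (ε / 2) ^ 2) < 1 := by
    have hc : 2 / ε ^ 2 ≤ c := Nat.le_ceil _
    have hN : (N + 1 : ℝ) ≤ 2 * (c * (N + 1) : ℕ) * (ε / 2) ^ 2 := by
      rw [div_le_iff₀ (by positivity)] at hc
      push_cast
      nlinarith [hc]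
    have h2 : (2 : ℝ) ^ (N + 1) < exp (N + 1) := by
      have h := pow_lt_pow_left₀ exp_one_gt_two zero_le_two N.succ_ne_zero
      rwa [exp_one_pow, Nat.cast_succ] at h
    calc 2 * 2 ^ N * exp (-2 * (c * (N + 1) : ℕ) * (ε / 2) ^ 2)
        ≤ 2 ^ (N + 1) * exp (-(N + 1)) := by
          rw [← pow_succ']
          gcongr
          linarith
      _ < exp (N + 1) * exp (-(N + 1)) := by gcongr
      _ = 1 := by rw [← exp_add]; simp
  have hpoly : ∀ᶠ N : ℕ in atTop,
      (d * (c + 1) ^ d : ℝ) * (((N + 1 : ℕ) : ℝ) ^ (2 * d) / 2 ^ (N + 1)) < 1 / 2 := by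
    have := ((tendsto_pow_const_div_const_pow_of_one_lt (2 * d) one_lt_two).comp
      (tendsto_add_atTop_nat 1)).const_mul (d * (c + 1) ^ d : ℝ)
    rw [mul_zero] at this
    exact this.eventually_lt_const (by norm_num)
  obtain ⟨N, hN⟩ := hpoly.exists
  refine ⟨N, c * (N + 1), hexp N, ?_⟩
  have hreal : (d * (c + 1) ^ d * (N + 1) ^ (2 * d) : ℝ) < 2 ^ N := by
    rw [mul_div_assoc', div_lt_iff₀ (by positivity), pow_succ] at hN
    push_cast at hN
    linarith
  calc d * (N * (c * (N + 1)) + 1) ^ d ≤ d * ((c + 1) * (N + 1) ^ 2) ^ d := by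
        gcongr
        nlinarith
    _ = d * (c + 1) ^ d * (N + 1) ^ (2 * d) := by rw [mul_pow, ← pow_mul, mul_assoc]
    _ < 2 ^ N := by exact_mod_cast hreal

theorem not_mapIndependent_relIndicators {R : X → Y → Prop} {d : ℕ}
    (hR : ∀ s, RelShatters R s → s.card < d) :
    ¬ MapIndependent fun (g : convexHull ℝ (relIndicators R)) (y : Y) => (g : Y → ℝ) y := by
  rintro ⟨r, -, ε, hε, hshatters⟩
  obtain ⟨N, m, hm, hlt⟩ := exists_exp_bound_lt_one_and_pow_lt_two_pow d hε
  obtain ⟨A, hAcard, hA⟩ := hshatters N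
  obtain ⟨A', hA'A, rfl⟩ := Finset.exists_subset_card_eq hAcard.le
  classical
  obtain ⟨y, x, hsep⟩ := exists_samples_of_shatters hε A'
    (fun K hK => (hA K (hK.trans hA'A)).imp fun y hy g hg =>
      ⟨(hy g (hA'A hg)).1.2, (hy g (hA'A hg)).2.2⟩) hm
  exact ((two_pow_card_le_of_forall_mem_iff hR A' y x hsep).trans_lt hlt).false

end Shattering

section ModelTheory

variable {U : Type} [L.Structure U] {nx ny : ℕ}

lemma FormulaIsNIP.exists_relShatters_card_lt {φ : L.Formula (Fin nx ⊕ Fin ny)}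
    (hφ : FormulaIsNIP U φ) :
    ∃ d, ∀ s, RelShatters (fun (c : Fin nx → U) b => φ.Realize (Sum.elim c b)) s → s.card < d := by
  by_contra! h
  exact hφ fun n => (h n).imp fun s hs => ⟨hs.2, hs.1⟩

lemma realize_iff_of_sameTypeOver (φ : L.Formula (Fin nx ⊕ Fin ny))
    {M : L.ElementarySubstructure U} (a : Fin nx → M) {b c : Fin ny → U}
    (h : SameTypeOver M b c) :
    φ.Realize (Sum.elim (fun i => (a i : U)) b) ↔ φ.Realize (Sum.elim (fun i => (a i : U)) c) := by
  have := h nx (φ.relabel (Sum.elim Sum.inr Sum.inl)) a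
  simp only [FirstOrder.Language.Formula.realize_relabel] at this
  convert this using 2 <;> funext i <;> cases i <;> rfl

lemma exists_mk_and_realize_iff (φ : L.Formula (Fin nx ⊕ Fin ny))
    {M : L.ElementarySubstructure U} (a : Fin nx → M) (p : TypeSpace M ny) :
    (∃ b, Quotient.mk (typeSetoid M ny) b = p ∧ φ.Realize (Sum.elim (fun i => (a i : U)) b)) ↔
      φ.Realize (Sum.elim (fun i => (a i : U)) p.out) :=
  ⟨fun ⟨_, hb, h⟩ =>
    (realize_iff_of_sameTypeOver φ a (Quotient.exact (hb.trans p.out_eq.symm))).1 h,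
    fun h => ⟨p.out, p.out_eq, h⟩⟩

end ModelTheory

theorem stmt_6_general
    {L : FirstOrder.Language.{0, 0}}
    {U : Type} [L.Structure U]
    (M : L.ElementarySubstructure U)
    {nx ny : ℕ} (φ : L.Formula (Fin nx ⊕ Fin ny))    (hNIP : FormulaIsNIP U φ) :
    ¬ MapIndependent
      (fun (g : ↥(convexHull ℝ (FamilyF φ M))) (p : TypeSpace M ny) => (g : _ → ℝ) p) := by
  obtain ⟨d, hd⟩ := hNIP.exists_relShatters_card_lt
  let toU : (Fin nx → M) ↪ (Fin nx → U) := ⟨fun a i => a i, Subtype.val_injective.comp_left⟩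
  -- `FamilyF φ M` unfolds to `relIndicators` of the relation `∃ b ⊨ p, φ(a; b)` on `M^x × S_y(M)`
  refine not_mapIndependent_relIndicators (d := d) fun s hs => ?_
  simpa only [Finset.card_map] using hd _ (hs.map toU Quotient.out (exists_mk_and_realize_iff φ))

/-- **Corollary 3.13.** If `φ(x;y)` is NIP, then the evaluation map
`Eval : conv(𝔽_M^φ) × S_y(M) → [0,1]`, `Eval(g,p) = g(p)`, is dependent. -/
theorem stmt_6
    {L : FirstOrder.Language.{0, 0}} (T : L.Theory) (hT : T.IsComplete)
    (hL : L.card ≤ Cardinal.aleph0)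
    {U : Type} [L.Structure U] [Nonempty U] (hUT : T.Model U)
    (κ : Cardinal.{0}) (hκ : Cardinal.aleph0 < κ) (hreg : κ.IsRegular)
    (hsat : IsSaturated L U κ) (hhom : IsStronglyHomogeneous L U κ)
    (M : L.ElementarySubstructure U) (hM : #M < κ)
    {nx ny : ℕ} (φ : L.Formula (Fin nx ⊕ Fin ny))    (hNIP : FormulaIsNIP U φ) :
    ¬ MapIndependent
      (fun (g : ↥(convexHull ℝ (FamilyF φ M))) (p : TypeSpace M ny) => (g : _ → ℝ) p) :=
  stmt_6_general M φ hNIP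
end

section
/- Let T be a complete first-order theory in a countable language L, U a monster model of T (κ-saturated and strongly κ-homogeneous for a sufficiently large cardinal κ), M an elementary substructure of U with |M| < κ, and φ(x;y) a partitioned L-formula. Let μ ∈ 𝔐_φ(U). Then μ is φ-definable over M if and only if μ is φ-invariant over M and the map F_μ^φ : S_y(M) → [0,1] is continuous. -/
open FirstOrder Cardinal Set Filter Topology

variable {L : FirstOrder.Language.{0, 0}}

/-! A partition witnessing `φ`-definability consists of `M`-definable pieces, i.e. basic clopen
sets of types, on which `F_μ^φ` oscillates by less than `ε`: this gives invariance and
continuity. Conversely, continuity gives around each type a basic clopen set on which `F_μ^φ`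
oscillates by less than `ε / 2`. By saturation the type space `S_y(M)` is compact, so finitely
many of these sets cover it; putting their parameters together and making them disjoint
yields the required partition. -/

namespace FirstOrder.Language.Formula

variable {L : FirstOrder.Language} {U : Type*} [L.Structure U] {β : Type*} {r : ℕ}

noncomputable def disjointed (ψ : Fin r → L.Formula β) (i : Fin r) : L.Formula β :=
  ψ i ⊓ ∼(Formula.iSup fun j : {j // j < i} => ψ j)

theorem realize_disjointed (ψ : Fin r → L.Formula β) (i : Fin r) (v : β → U) :
    (disjointed ψ i).Realize v ↔ (ψ i).Realize v ∧ ∀ j < i, ¬ (ψ j).Realize v := by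
  simp [disjointed, realize_iSup]

theorem existsUnique_realize_disjointed (ψ : Fin r → L.Formula β) {v : β → U}
    (h : ∃ i, (ψ i).Realize v) : ∃! i, (disjointed ψ i).Realize v := by
  classical
  have hne : (Finset.univ.filter fun i => (ψ i).Realize v).Nonempty := by
    simpa [Finset.filter_nonempty_iff] using h
  set i₀ := (Finset.univ.filter fun i => (ψ i).Realize v).min' hne
  have hi₀ : (ψ i₀).Realize v := by simpa using Finset.min'_mem _ hne
  have hmin : ∀ j < i₀, ¬ (ψ j).Realize v := fun j hj hψj =>
    (Finset.min'_le _ j (by simpa using hψj)).not_gt hj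
  refine ⟨i₀, (realize_disjointed ψ i₀ v).2 ⟨hi₀, hmin⟩, fun i hi => ?_⟩
  obtain ⟨hψi, hbefore⟩ := (realize_disjointed ψ i v).1 hi
  rcases lt_trichotomy i i₀ with hlt | heq | hgt
  · exact absurd hψi (hmin i hlt)
  · exact heq
  · exact absurd hi₀ (hbefore i₀ hgt)

end FirstOrder.Language.Formula

section

variable {U : Type} [L.Structure U] (M : L.ElementarySubstructure U)

theorem exists_common_parameters {ι α : Type} [Fintype ι] {k : ι → ℕ}
    (ψ : ∀ i, L.Formula (α ⊕ Fin (k i))) (m : ∀ i, Fin (k i) → M) :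
    ∃ (K : ℕ) (ψ' : ι → L.Formula (α ⊕ Fin K)) (c : Fin K → M), ∀ i (v : α → U),
      (ψ' i).Realize (Sum.elim v fun j => (c j : U)) ↔
        (ψ i).Realize (Sum.elim v fun j => (m i j : U)) := by
  let e := Fintype.equivFin (Σ i, Fin (k i))
  let param : (Σ i, Fin (k i)) → M := fun x => m x.1 x.2
  refine ⟨_, fun i => (ψ i).relabel (Sum.map id fun t => e ⟨i, t⟩),
    fun j => param (e.symm j), fun i v => ?_⟩
  rw [Language.Formula.realize_relabel]
  congr! 1
  ext (x | t)
  · rfl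
  · change ((param (e.symm (e ⟨i, t⟩)) : U)) = _
    rw [e.symm_apply_apply]; rfl

namespace TypeSpace

variable {M}

theorem sameTypeOver_out_mk {n : ℕ} (b : Fin n → U) :
    SameTypeOver M (Quotient.mk (typeSetoid M n) b).out b :=
  Quotient.exact (s := typeSetoid M n) (Quotient.out_eq _)

variable (M)

def basicSet {n k : ℕ} (ψ : L.Formula (Fin n ⊕ Fin k)) (m : Fin k → M) :
    Set (TypeSpace M n) :=
  { p | ψ.Realize (Sum.elim p.out fun i => (m i : U)) }

def basicSets (n : ℕ) : Set (Set (TypeSpace M n)) :=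
  { S | ∃ (k : ℕ) (ψ : L.Formula (Fin n ⊕ Fin k)) (m : Fin k → M), S = basicSet M ψ m }

variable {M}

theorem mk_mem_basicSet {n k : ℕ} {ψ : L.Formula (Fin n ⊕ Fin k)} {m : Fin k → M}
    {b : Fin n → U} :
    Quotient.mk (typeSetoid M n) b ∈ basicSet M ψ m ↔
      ψ.Realize (Sum.elim b fun i => (m i : U)) :=
  sameTypeOver_out_mk b k ψ m

theorem typeSpaceTopology_eq_generateFrom (n : ℕ) :
    typeSpaceTopology M n = TopologicalSpace.generateFrom (basicSets M n) := by
  refine congrArg _ (Set.ext fun S => exists₃_congr fun k ψ m => ?_)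
  suffices basicSet M ψ m = _ by rw [this]
  ext p
  constructor
  · exact fun h => ⟨p.out, p.out_eq, h⟩
  · rintro ⟨b, rfl, h⟩
    exact mk_mem_basicSet.2 h

theorem isOpen_basicSet {n k : ℕ} (ψ : L.Formula (Fin n ⊕ Fin k)) (m : Fin k → M) :
    IsOpen (basicSet M ψ m) := by
  rw [typeSpaceTopology_eq_generateFrom]
  exact TopologicalSpace.isOpen_generateFrom_of_mem ⟨k, ψ, m, rfl⟩

theorem isTopologicalBasis_basicSets (n : ℕ) :
    TopologicalSpace.IsTopologicalBasis (basicSets M n) where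
  exists_subset_inter := by
    rintro _ ⟨k₁, ψ₁, m₁, rfl⟩ _ ⟨k₂, ψ₂, m₂, rfl⟩ p hp
    obtain ⟨K, ψ', c, hψ'⟩ := exists_common_parameters M (k := fun b => cond b k₁ k₂)
      (@Bool.rec (fun b => L.Formula (Fin n ⊕ Fin (cond b k₁ k₂))) ψ₂ ψ₁)
      (@Bool.rec (fun b => Fin (cond b k₁ k₂) → M) m₂ m₁)
    have hinter : basicSet M (ψ' true ⊓ ψ' false) c = basicSet M ψ₁ m₁ ∩ basicSet M ψ₂ m₂ := by
      ext q
      exact (Language.Formula.realize_inf).trans (and_congr (hψ' true _) (hψ' false _))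
    exact ⟨_, ⟨K, _, c, rfl⟩, hinter ▸ hp, hinter.subset⟩
  sUnion_eq := Set.sUnion_eq_univ_iff.2 fun _ => ⟨_, ⟨0, ⊤, Fin.elim0, rfl⟩, by simp [basicSet]⟩
  eq_generateFrom := typeSpaceTopology_eq_generateFrom n

theorem compactSpace_of_isSaturated {κ : Cardinal.{0}} (hsat : IsSaturated L U κ)
    (hM : #M < κ) (n : ℕ) : CompactSpace (TypeSpace M n) := by
  refine compactSpace_generateFrom (typeSpaceTopology_eq_generateFrom n) fun P hP hcover => ?_
  by_contra! hfin
  have realize_not_relabel : ∀ {k} (ψ : L.Formula (Fin n ⊕ Fin k)) (m : Fin k → M) b,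
      ((ψ.relabel (Sum.map id m)).not).Realize (Sum.elim b ((↑) : M → U)) ↔
        Quotient.mk (typeSetoid M n) b ∉ basicSet M ψ m := by
    intro k ψ m b
    rw [Language.Formula.realize_not, Language.Formula.realize_relabel, mk_mem_basicSet,
      Sum.elim_comp_map]
    rfl
  -- Without a finite subcover the negations of the formulas defining members of `P` are
  -- finitely satisfiable, so saturation realizes a type lying in no member of `P`.
  let Φ : Set (L.Formula (Fin n ⊕ M)) :=
    { χ | ∃ (k : ℕ) (ψ : L.Formula (Fin n ⊕ Fin k)) (m : Fin k → M),
        basicSet M ψ m ∈ P ∧ χ = (ψ.relabel (Sum.map id m)).not }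
  obtain ⟨a, ha⟩ := hsat M hM (↑) n Φ fun s hs => by
    have hwit : ∀ χ ∈ s, ∃ S ∈ P, ∀ b : Fin n → U,
        χ.Realize (Sum.elim b (↑)) ↔ Quotient.mk (typeSetoid M n) b ∉ S := by
      intro χ hχ
      obtain ⟨k, ψ, m, hP, rfl⟩ := hs hχ
      exact ⟨_, hP, realize_not_relabel ψ m⟩
    choose! W hWP hW using hwit
    obtain ⟨p, hp⟩ := (Set.ne_univ_iff_exists_notMem _).1 <|
      hfin (W '' s) (Set.image_subset_iff.2 hWP) (s.finite_toSet.image W)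
    refine ⟨p.out, fun χ hχ => (hW χ hχ _).2 ?_⟩
    rw [show Quotient.mk (typeSetoid M n) p.out = p from p.out_eq]
    exact fun hpW => hp ⟨W χ, ⟨χ, hχ, rfl⟩, hpW⟩
  obtain ⟨S, hSP, haS⟩ := Set.mem_sUnion.1 (hcover ▸ Set.mem_univ (Quotient.mk _ a))
  obtain ⟨k, ψ, m, rfl⟩ := hP hSP
  exact (realize_not_relabel ψ m a).1 (ha _ ⟨k, ψ, m, hSP, rfl⟩) haS

theorem exists_partition_of_cover {n r : ℕ} {B : Fin r → Set (TypeSpace M n)}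
    (hB : ∀ i, B i ∈ basicSets M n) (hcover : ∀ p, ∃ i, p ∈ B i) :
    ∃ (K : ℕ) (θ : Fin r → L.Formula (Fin n ⊕ Fin K)) (c : Fin K → M),
      (∀ b : Fin n → U, ∃! i, (θ i).Realize (Sum.elim b fun j => (c j : U))) ∧
      ∀ i b, (θ i).Realize (Sum.elim b fun j => (c j : U)) →
        Quotient.mk (typeSetoid M n) b ∈ B i := by
  choose k ψ m hψ using hB
  obtain ⟨K, ψ', c, hψ'⟩ := exists_common_parameters M ψ m
  have hmem : ∀ i b, (ψ' i).Realize (Sum.elim b fun j => (c j : U)) ↔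
      Quotient.mk (typeSetoid M n) b ∈ B i := fun i b => by
    rw [hψ i, mk_mem_basicSet]
    exact hψ' i b
  refine ⟨K, Language.Formula.disjointed ψ', c, fun b => ?_, fun i b h =>
    (hmem i b).1 ((Language.Formula.realize_disjointed _ _ _).1 h).1⟩
  obtain ⟨i, hi⟩ := hcover (Quotient.mk _ b)
  exact Language.Formula.existsUnique_realize_disjointed _ ⟨i, (hmem i b).2 hi⟩

end TypeSpace

end

section KeislerMeasure

variable {U : Type} [L.Structure U] {M : L.ElementarySubstructure U} {nx ny : ℕ}
  {φ : L.Formula (Fin nx ⊕ Fin ny)} {μ : KeislerMeasure U φ}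

theorem PhiInvariant.funMu_mk (hinv : PhiInvariant φ M μ) (b : Fin ny → U) :
    FunMu φ M μ (Quotient.mk (typeSetoid M ny) b) = μ.toFun (phiSet φ b) :=
  hinv _ _ (TypeSpace.sameTypeOver_out_mk b)

theorem PhiDefinable.phiInvariant (h : PhiDefinable φ M μ) : PhiInvariant φ M μ := by
  intro b c hbc
  by_contra hne
  obtain ⟨m, k, ψ, d, hpart, hvar⟩ := h _ (abs_pos.2 (sub_ne_zero.2 hne))
  obtain ⟨i, hi, -⟩ := hpart b
  exact lt_irrefl _ (hvar i b c hi ((hbc k (ψ i) d).1 hi))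

theorem PhiDefinable.continuous_funMu (h : PhiDefinable φ M μ) :
    Continuous (FunMu φ M μ) := by
  refine continuous_iff_continuousAt.2 fun p => Metric.tendsto_nhds.2 fun ε hε => ?_
  obtain ⟨m, k, ψ, d, hpart, hvar⟩ := h ε hε
  obtain ⟨i, hi, -⟩ := hpart p.out
  filter_upwards [(TypeSpace.isOpen_basicSet (ψ i) d).mem_nhds hi] with q hq
  exact hvar i q.out p.out hq hi

theorem phiDefinable_of_continuous [CompactSpace (TypeSpace M ny)]
    (hinv : PhiInvariant φ M μ) (hcont : Continuous (FunMu φ M μ)) : PhiDefinable φ M μ := by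
  intro ε hε
  have hnbhd : ∀ p, ∃ S ∈ TypeSpace.basicSets M ny, p ∈ S ∧
      S ⊆ FunMu φ M μ ⁻¹' Metric.ball (FunMu φ M μ p) (ε / 2) := fun p =>
    (TypeSpace.isTopologicalBasis_basicSets ny).mem_nhds_iff.1 <|
      hcont.continuousAt.preimage_mem_nhds (Metric.ball_mem_nhds _ (half_pos hε))
  choose S hS hpS hSball using hnbhd
  obtain ⟨t, ht⟩ := CompactSpace.elim_nhds_subcover S fun p =>
    ((TypeSpace.isTopologicalBasis_basicSets ny).isOpen (hS p)).mem_nhds (hpS p)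
  let center : Fin t.card → TypeSpace M ny := fun i => t.equivFin.symm i
  have hcover : ∀ q, ∃ i, q ∈ S (center i) := fun q => by
    obtain ⟨p, hpt, hqp⟩ := Set.mem_iUnion₂.1 (Set.eq_univ_iff_forall.1 ht q)
    exact ⟨t.equivFin ⟨p, hpt⟩, by simpa [center] using hqp⟩
  obtain ⟨K, θ, c, hpart, hθ⟩ :=
    TypeSpace.exists_partition_of_cover (fun i => hS (center i)) hcover
  refine ⟨t.card, K, θ, c, hpart, fun i e e' he he' => ?_⟩
  have hde : dist (μ.toFun (phiSet φ e)) (FunMu φ M μ (center i)) < ε / 2 := by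
    rw [← hinv.funMu_mk]
    exact hSball _ (hθ i e he)
  have hde' : dist (μ.toFun (phiSet φ e')) (FunMu φ M μ (center i)) < ε / 2 := by
    rw [← hinv.funMu_mk]
    exact hSball _ (hθ i e' he')
  rw [← Real.dist_eq]
  calc _ ≤ dist (μ.toFun (phiSet φ e)) (FunMu φ M μ (center i)) +
          dist (μ.toFun (phiSet φ e')) (FunMu φ M μ (center i)) := dist_triangle_right _ _ _
    _ < ε / 2 + ε / 2 := add_lt_add hde hde'
    _ = ε := add_halves ε

end KeislerMeasure

theorem stmt_8_general
    {L : FirstOrder.Language.{0, 0}}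
    {U : Type} [L.Structure U]
    (κ : Cardinal.{0})
    (hsat : IsSaturated L U κ)
    (M : L.ElementarySubstructure U) (hM : #M < κ)
    {nx ny : ℕ} (φ : L.Formula (Fin nx ⊕ Fin ny))    (μ : KeislerMeasure U φ) :
    PhiDefinable φ M μ ↔ (PhiInvariant φ M μ ∧ Continuous (FunMu φ M μ)) := by
  have := TypeSpace.compactSpace_of_isSaturated hsat hM ny
  exact ⟨fun h => ⟨h.phiInvariant, h.continuous_funMu⟩,
    fun ⟨hinv, hcont⟩ => phiDefinable_of_continuous hinv hcont⟩

/-- **Proposition 4.5.** `μ ∈ 𝔐_φ(U)` is `φ`-definable over `M` if and only if `μ` is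
`φ`-invariant over `M` and the map `F_μ^φ : S_y(M) → [0,1]` is continuous. -/
theorem stmt_8
    {L : FirstOrder.Language.{0, 0}} (T : L.Theory) (hT : T.IsComplete)
    (hL : L.card ≤ Cardinal.aleph0)
    {U : Type} [L.Structure U] [Nonempty U] (hUT : T.Model U)
    (κ : Cardinal.{0}) (hκ : Cardinal.aleph0 < κ) (hreg : κ.IsRegular)
    (hsat : IsSaturated L U κ) (hhom : IsStronglyHomogeneous L U κ)
    (M : L.ElementarySubstructure U) (hM : #M < κ)
    {nx ny : ℕ} (φ : L.Formula (Fin nx ⊕ Fin ny))    (μ : KeislerMeasure U φ) :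
    PhiDefinable φ M μ ↔ (PhiInvariant φ M μ ∧ Continuous (FunMu φ M μ)) :=
  stmt_8_general κ hsat M hM φ μ
end

section
/- Let T be a complete first-order theory in a countable language L, U a monster model of T (κ-saturated and strongly κ-homogeneous for a sufficiently large cardinal κ), M an elementary substructure of U with |M| < κ, and φ(x;y) a partitioned L-formula. If μ ∈ 𝔐_φ(U) is finitely approximable over M, then μ is generically stable over M. -/
open FirstOrder Cardinal Set Filter Topology

variable {L : FirstOrder.Language.{0, 0}}

/-!
Fix `θ(x;ȳ) ∈ Δ_φ` and a sequence `a_1, …, a_n` in `M` approximating `μ(θ(x;ȳ))` within `ε/2`.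
The truth values of the `M`-formulas `θ(a_i;ȳ)` split `U^ȳ` into at most `2^n` pieces defined
over `M`, and `Av(ā)(θ(x;ȳ))` is constant on each piece, so `μ(θ(x;ȳ))` varies by less than `ε`
there. For finite satisfiability, approximating `ψ` within `μ(ψ) > 0` forces `Av(ā)(ψ) > 0`,
so some `a_i` realizes `ψ`.
-/

namespace FirstOrder.Language.Formula

noncomputable def truthPattern {α : Type*} {n : ℕ} (χ : Fin n → L.Formula α)
    (s : Fin n → Bool) : L.Formula α :=
  iInf fun t => if s t then χ t else (χ t).not

open Classical in
theorem realize_truthPattern {α N : Type*} [L.Structure N] {n : ℕ} (χ : Fin n → L.Formula α)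
    (s : Fin n → Bool) (v : α → N) :
    (truthPattern χ s).Realize v ↔ (fun t => decide ((χ t).Realize v)) = s := by
  rw [truthPattern, realize_iInf, funext_iff]
  refine forall_congr' fun t => ?_
  cases s t <;> simp

theorem exists_partition_refining {α : Type*} (N : Type*) [L.Structure N] {n : ℕ}
    (χ : Fin n → L.Formula α) :
    ∃ (m : ℕ) (ρ : Fin m → L.Formula α), (∀ v : α → N, ∃! i, (ρ i).Realize v) ∧
      ∀ i (v v' : α → N), (ρ i).Realize v → (ρ i).Realize v' →
        ∀ t, ((χ t).Realize v ↔ (χ t).Realize v') := by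
  classical
  let e := Fintype.equivFin (Fin n → Bool)
  have realize_iff (i) (v : α → N) :
      (truthPattern χ (e.symm i)).Realize v ↔ e (fun t => decide ((χ t).Realize v)) = i := by
    rw [realize_truthPattern, Equiv.eq_symm_apply]
  refine ⟨_, fun i => truthPattern χ (e.symm i), fun v => ?_, fun i v v' hv hv' t => ?_⟩
  · simp only [realize_iff]
    exact existsUnique_eq'
  · rw [realize_iff] at hv hv'
    simpa using congrFun (e.injective (hv.trans hv'.symm)) t

theorem exists_instances {β P N : Type*} [L.Structure N] (f : P → N) {n nx : ℕ}
    (θ : L.Formula (Fin nx ⊕ β)) (a : Fin n → Fin nx → P) :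
    ∃ (j : ℕ) (c : Fin j → P) (χ : Fin n → L.Formula (β ⊕ Fin j)),
      ∀ t (v : β → N), (χ t).Realize (Sum.elim v fun r => f (c r)) ↔
        θ.Realize (Sum.elim (fun q => f (a t q)) v) := by
  let pe : Fin n × Fin nx ≃ Fin (n * nx) := finProdFinEquiv
  refine ⟨n * nx, fun r => a (pe.symm r).1 (pe.symm r).2,
    fun t => θ.relabel (Sum.elim (fun q => Sum.inr (pe (t, q))) Sum.inl), fun t v => ?_⟩
  rw [realize_relabel]
  congr!
  ext (q | b) <;> simp

end FirstOrder.Language.Formula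

open FirstOrder.Language

theorem InDeltaPhi.exists_formula {U : Type} [L.Structure U] {nx ny : ℕ}
    {φ : L.Formula (Fin nx ⊕ Fin ny)} {k : ℕ} {G : (Fin k → Fin ny → U) → Set (Fin nx → U)}
    (h : InDeltaPhi φ k G) :
    ∃ θ : L.Formula (Fin nx ⊕ (Fin k × Fin ny)),
      ∀ (bs : Fin k → Fin ny → U) (a : Fin nx → U),
        a ∈ G bs ↔ θ.Realize (Sum.elim a (fun q => bs q.1 q.2)) := by
  induction h with
  | inst j =>
    refine ⟨φ.relabel (Sum.map id (fun i => (j, i))), fun bs a => ?_⟩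
    change φ.Realize (Sum.elim a (bs j)) ↔ _
    rw [Formula.realize_relabel]
    congr!
    ext (x | x) <;> rfl
  | empty => exact ⟨⊥, by simp⟩
  | compl _ ih =>
    obtain ⟨θ, hθ⟩ := ih
    exact ⟨θ.not, by simp [hθ]⟩
  | union _ _ ih₁ ih₂ =>
    obtain ⟨θ₁, hθ₁⟩ := ih₁
    obtain ⟨θ₂, hθ₂⟩ := ih₂
    exact ⟨θ₁ ⊔ θ₂, by simp [hθ₁, hθ₂]⟩

theorem InDeltaPhi.reindex {U : Type} [L.Structure U] {nx ny : ℕ}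
    {φ : L.Formula (Fin nx ⊕ Fin ny)} {k : ℕ} {G : (Fin k → Fin ny → U) → Set (Fin nx → U)}
    (h : InDeltaPhi φ k G) {k' : ℕ} (f : Fin k → Fin k') :
    InDeltaPhi φ k' (fun bs => G (fun i => bs (f i))) := by
  induction h with
  | inst j => exact .inst k' (f j)
  | empty => exact .empty k'
  | compl _ ih => exact ih.compl
  | union _ _ ih₁ ih₂ => exact ih₁.union ih₂

theorem InPhiAlg.exists_inDeltaPhi {U : Type} [L.Structure U] {nx ny : ℕ}
    {φ : L.Formula (Fin nx ⊕ Fin ny)} {s : Set (Fin nx → U)} (h : InPhiAlg φ s) :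
    ∃ (k : ℕ) (G : (Fin k → Fin ny → U) → Set (Fin nx → U)) (bs : Fin k → Fin ny → U),
      InDeltaPhi φ k G ∧ G bs = s := by
  induction h with
  | basic b => exact ⟨1, fun bs => phiSet φ (bs 0), fun _ => b, .inst 1 0, rfl⟩
  | empty => exact ⟨0, fun _ => ∅, Fin.elim0, .empty 0, rfl⟩
  | compl _ ih =>
    obtain ⟨k, G, bs, hG, rfl⟩ := ih
    exact ⟨k, fun bs => (G bs)ᶜ, bs, hG.compl, rfl⟩
  | union _ _ ih₁ ih₂ =>
    obtain ⟨k₁, G₁, bs₁, hG₁, rfl⟩ := ih₁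
    obtain ⟨k₂, G₂, bs₂, hG₂, rfl⟩ := ih₂
    refine ⟨k₁ + k₂,
      fun bs => G₁ (fun i => bs (Fin.castAdd k₂ i)) ∪ G₂ (fun i => bs (Fin.natAdd k₁ i)),
      Fin.append bs₁ bs₂, (hG₁.reindex _).union (hG₂.reindex _), ?_⟩
    simp only [Fin.append_left, Fin.append_right]

theorem Av_congr {α : Type*} {n : ℕ} {a : Fin n → α} {s t : Set α}
    (h : ∀ i, a i ∈ s ↔ a i ∈ t) : Av a s = Av a t := by
  unfold Av
  congr 1
  exact Finset.sum_congr rfl fun i _ => Set.indicator_const_eq_indicator_const (h i)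

theorem exists_mem_of_Av_pos {α : Type*} {n : ℕ} {a : Fin n → α} {s : Set α}
    (h : 0 < Av a s) : ∃ i, a i ∈ s := by
  by_contra! hs
  simp [Av, Set.indicator_of_notMem (hs _)] at h

section FinApprox

variable {U : Type} [L.Structure U] {M : L.ElementarySubstructure U} {nx ny : ℕ}
  {φ : L.Formula (Fin nx ⊕ Fin ny)} {μ : KeislerMeasure U φ}

theorem DefinableOver.of_finApprox (hfa : FinApprox φ M μ) : DefinableOver φ M μ := by
  intro k G hG ε hε
  obtain ⟨n, -, a, happrox⟩ := hfa k G hG (ε / 2) (half_pos hε)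
  obtain ⟨θ, hθ⟩ := hG.exists_formula
  obtain ⟨j, c, χ, hχ⟩ := θ.exists_instances (Subtype.val : M → U) a
  obtain ⟨m, ρ, hpart, hrefine⟩ := Formula.exists_partition_refining U χ
  refine ⟨m, j, ρ, c, fun bs => hpart _, fun i e e' he he' => ?_⟩
  have hAv : Av (fun t q => (a t q : U)) (G e) = Av (fun t q => (a t q : U)) (G e') :=
    Av_congr fun t => by
      rw [hθ, hθ, ← hχ, ← hχ]
      exact hrefine i _ _ he he' t
  have h := happrox e
  have h' := happrox e'
  rw [hAv] at h
  rw [abs_sub_lt_iff] at h h' ⊢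
  constructor <;> linarith

theorem FinSat.of_finApprox (hfa : FinApprox φ M μ) : FinSat φ M μ := by
  intro s hs hpos
  obtain ⟨k, G, bs, hG, rfl⟩ := hs.exists_inDeltaPhi
  obtain ⟨n, -, a, happrox⟩ := hfa k G hG _ hpos
  have hAv : 0 < Av (fun t q => (a t q : U)) (G bs) := by
    have h := happrox bs
    rw [abs_sub_lt_iff] at h
    linarith
  obtain ⟨t, ht⟩ := exists_mem_of_Av_pos hAv
  exact ⟨a t, ht⟩

end FinApprox

theorem stmt_13_general
    {L : FirstOrder.Language.{0, 0}}
    {U : Type} [L.Structure U]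
    (M : L.ElementarySubstructure U)
    {nx ny : ℕ} (φ : L.Formula (Fin nx ⊕ Fin ny))    (μ : KeislerMeasure U φ)
    (hfa : FinApprox φ M μ) :
    GenericallyStable φ M μ :=
  ⟨.of_finApprox hfa, .of_finApprox hfa⟩

/-- **Proposition 4.13(v).** If `μ ∈ 𝔐_φ(U)` is finitely approximable over `M`, then `μ`
is generically stable over `M`. -/
theorem stmt_13
    {L : FirstOrder.Language.{0, 0}} (T : L.Theory) (hT : T.IsComplete)
    (hL : L.card ≤ Cardinal.aleph0)
    {U : Type} [L.Structure U] [Nonempty U] (hUT : T.Model U)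
    (κ : Cardinal.{0}) (hκ : Cardinal.aleph0 < κ) (hreg : κ.IsRegular)
    (hsat : IsSaturated L U κ) (hhom : IsStronglyHomogeneous L U κ)
    (M : L.ElementarySubstructure U) (hM : #M < κ)
    {nx ny : ℕ} (φ : L.Formula (Fin nx ⊕ Fin ny))    (μ : KeislerMeasure U φ)
    (hfa : FinApprox φ M μ) :
    GenericallyStable φ M μ :=
  stmt_13_general M φ μ hfa
end
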